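/- arXiv:0712.0593 — 5 statements merged into one kernel-verified Lean document; each statement's English description precedes it below -/
import Mathlib

section
/- The number of forests consisting of m binary trees (plane trees where each node has 0 or 2 children) with n nodes in total equals (m/n) · C(n, (n+m)/2), with the convention that the binomial coefficient is 0 if (n+m)/2 is not a nonnegative integer. -/
/-- Plane trees: a node carries the (ordered) list of its subtrees. -/
inductive PlaneTree : Type
  | node : List PlaneTree → PlaneTree

namespace PlaneTree

/-- Total number of nodes of a plane tree. -/
def size : PlaneTree → ℕ
  | node ts => 1 + (ts.attach.map (fun x => size x.1)).sum
decreasing_by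
  have := List.sizeOf_lt_of_mem x.2
  simp only [PlaneTree.node.sizeOf_spec]
  omega

/-- A ternary tree is a plane tree in which every node has 0 or 3 children. -/
inductive IsTernary : PlaneTree → Prop
  | leaf : IsTernary (node [])
  | node3 (a b c : PlaneTree) : IsTernary a → IsTernary b → IsTernary c →
      IsTernary (node [a, b, c])

/-- Number of internal nodes (nodes with at least one child). -/
def numInternal : PlaneTree → ℕ
  | node ts => (if ts.length = 0 then 0 else 1) + (ts.attach.map (fun x => numInternal x.1)).sum
decreasing_by
  have := List.sizeOf_lt_of_mem x.2
  simp only [PlaneTree.node.sizeOf_spec]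
  omega

/-- Number of leaves (nodes with no child). -/
def numLeaves : PlaneTree → ℕ
  | node ts => (if ts.length = 0 then 1 else 0) + (ts.attach.map (fun x => numLeaves x.1)).sum
decreasing_by
  have := List.sizeOf_lt_of_mem x.2
  simp only [PlaneTree.node.sizeOf_spec]
  omega

/-- The list of root subtrees. -/
def children : PlaneTree → List PlaneTree
  | node ts => ts

/-- The fringe subtree of a tree at the node addressed by a word (sequence of child
indices), if it exists. -/
def subtreeAt : List ℕ → PlaneTree → Option PlaneTree
  | [], t => some t
  | i :: rest, t => (t.children[i]?).bind (subtreeAt rest)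

end PlaneTree

namespace PlaneTree

/-- A binary tree is a plane tree in which every node has 0 or 2 children. -/
inductive IsBinary : PlaneTree → Prop
  | leaf : IsBinary (node [])
  | node2 (a b : PlaneTree) : IsBinary a → IsBinary b → IsBinary (node [a, b])

end PlaneTree

/-!
Deleting the root of the first tree turns a forest of `m + 1` binary trees with `n + 1` nodes
into a forest with `n` nodes and either `m` trees (the root was a leaf) or `m + 2` trees (its
two subtrees become trees of their own). Hence the counts satisfy
`c (m + 1) (n + 1) = c m n + c (m + 2) n`, and `n * c m n = m * C(n, (n + m) / 2)` follows by
induction on `n`, the step being an identity between binomial coefficients.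
-/

/-- `n` times the ballot number `(m / n) · C(n, (n + m) / 2)`. -/
def scaledBallot (m n : ℕ) : ℕ :=
  if (n + m) % 2 = 0 then m * n.choose ((n + m) / 2) else 0

lemma scaledBallot_zero_right (m : ℕ) : scaledBallot m 0 = 0 := by
  unfold scaledBallot
  split_ifs
  · rcases m with _ | m
    · rfl
    · rw [Nat.choose_eq_zero_of_lt (by omega), mul_zero]
  · rfl

lemma add_one_mul_choose_add_choose (n m k : ℕ) (h : n + m = 2 * k) :
    (n + 1) * (m * n.choose k + (m + 2) * n.choose (k + 1)) =
      n * ((m + 1) * (n + 1).choose (k + 1)) := by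
  rcases le_or_gt k n with hk | hk
  · have h1 := Nat.add_one_mul_choose_eq n k
    have h2 := Nat.choose_mul_succ_eq n (k + 1)
    obtain ⟨j, rfl⟩ := Nat.exists_eq_add_of_le hk
    obtain rfl : k = m + j := by omega
    simp only [Nat.add_sub_add_right, Nat.add_sub_cancel_left] at h2
    linear_combination m * h1 + (m + 2) * h2
  · simp [Nat.choose_eq_zero_of_lt hk, Nat.choose_eq_zero_of_lt (Nat.lt_succ_of_lt hk),
      Nat.choose_eq_zero_of_lt (Nat.succ_lt_succ hk)]

lemma add_one_mul_scaledBallot_add (m n : ℕ) :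
    (n + 1) * (scaledBallot m n + scaledBallot (m + 2) n) = n * scaledBallot (m + 1) (n + 1) := by
  unfold scaledBallot
  by_cases h : (n + m) % 2 = 0
  · rw [if_pos h, if_pos (by omega), if_pos (by omega),
      show (n + (m + 2)) / 2 = (n + m) / 2 + 1 by omega,
      show (n + 1 + (m + 1)) / 2 = (n + m) / 2 + 1 by omega]
    exact add_one_mul_choose_add_choose n m _ (by omega)
  · rw [if_neg h, if_neg (by omega), if_neg (by omega), add_zero, mul_zero, mul_zero]

namespace PlaneTree

lemma size_node (ts : List PlaneTree) : (node ts).size = 1 + (ts.map size).sum := by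
  rw [size, List.attach_map_val]

lemma size_pos (t : PlaneTree) : 0 < t.size := by
  cases t
  rw [size_node]
  omega

def binaryForests (m n : ℕ) : Set (List PlaneTree) :=
  {f | f.length = m ∧ (∀ t ∈ f, t.IsBinary) ∧ (f.map size).sum = n}

def joinFirstTwo : List PlaneTree → List PlaneTree
  | a :: b :: f => node [a, b] :: f
  | f => f

lemma joinFirstTwo_injOn : Set.InjOn joinFirstTwo {f | 2 ≤ f.length} := by
  rintro (_ | ⟨a, _ | ⟨b, f⟩⟩) hf (_ | ⟨c, _ | ⟨d, g⟩⟩) hg h <;>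
    simp_all [joinFirstTwo]

lemma binaryForests_zero_zero : binaryForests 0 0 = {[]} := by
  ext f
  simp +contextual [binaryForests, List.length_eq_zero_iff]

lemma binaryForests_zero_succ (n : ℕ) : binaryForests 0 (n + 1) = ∅ := by
  ext f
  simp +contextual [binaryForests, List.length_eq_zero_iff]

lemma binaryForests_succ_zero (m : ℕ) : binaryForests (m + 1) 0 = ∅ := by
  ext (_ | ⟨t, f⟩)
  · simp [binaryForests]
  · simp only [binaryForests, Set.mem_ofPred_eq, List.map_cons, List.sum_cons,
      Set.mem_empty_iff_false, iff_false]
    have := size_pos t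
    omega

lemma binaryForests_succ_succ (m n : ℕ) :
    binaryForests (m + 1) (n + 1) =
      List.cons (node []) '' binaryForests m n ∪ joinFirstTwo '' binaryForests (m + 2) n := by
  ext f
  simp only [binaryForests, Set.mem_union, Set.mem_image, Set.mem_ofPred_eq]
  constructor
  · rintro ⟨hlen, hbin, hsum⟩
    obtain ⟨t, f, rfl⟩ := List.exists_cons_of_length_eq_add_one hlen
    rw [List.forall_mem_cons] at hbin
    cases hbin.1 with
    | leaf =>
      simp only [List.map_cons, List.sum_cons, size_node, List.map_nil, List.sum_nil] at hsum
      exact Or.inl ⟨f, ⟨by simpa using hlen, hbin.2, by omega⟩, rfl⟩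
    | node2 a b ha hb =>
      simp only [List.map_cons, List.sum_cons, size_node, List.map_nil, List.sum_nil] at hsum
      refine Or.inr ⟨a :: b :: f, ⟨by simpa using hlen, ?_, by simp; omega⟩, rfl⟩
      simpa only [List.forall_mem_cons] using ⟨ha, hb, hbin.2⟩
  · rintro (⟨f, ⟨hlen, hbin, hsum⟩, rfl⟩ | ⟨_ | ⟨a, _ | ⟨b, f⟩⟩, ⟨hlen, hbin, hsum⟩, rfl⟩)
    · exact ⟨by simpa, by simpa [IsBinary.leaf], by simp [size_node]; omega⟩
    · simp at hlen
    · simp at hlen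
    · simp only [List.map_cons, List.sum_cons, List.forall_mem_cons] at hsum hbin
      refine ⟨by simpa [joinFirstTwo] using hlen, ?_, ?_⟩
      · simpa [joinFirstTwo] using ⟨IsBinary.node2 a b hbin.1 hbin.2.1, hbin.2.2⟩
      · simp [joinFirstTwo, size_node]
        omega

lemma binaryForests_finite : ∀ n m : ℕ, (binaryForests m n).Finite
  | 0, 0 => by rw [binaryForests_zero_zero]; exact Set.finite_singleton _
  | 0, m + 1 => by rw [binaryForests_succ_zero]; exact Set.finite_empty
  | n + 1, 0 => by rw [binaryForests_zero_succ]; exact Set.finite_empty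
  | n + 1, m + 1 => by
    rw [binaryForests_succ_succ]
    exact ((binaryForests_finite n m).image _).union ((binaryForests_finite n (m + 2)).image _)

lemma ncard_binaryForests_succ_succ (m n : ℕ) :
    (binaryForests (m + 1) (n + 1)).ncard =
      (binaryForests m n).ncard + (binaryForests (m + 2) n).ncard := by
  have hlong : binaryForests (m + 2) n ⊆ {f | 2 ≤ f.length} := fun f hf => by
    simp [hf.1]
  have hdisj : Disjoint (List.cons (node []) '' binaryForests m n)
      (joinFirstTwo '' binaryForests (m + 2) n) := by
    refine Set.disjoint_left.2 ?_
    rintro _ ⟨f, -, rfl⟩ ⟨_ | ⟨a, _ | ⟨b, g⟩⟩, hg, h⟩ <;> simp_all [joinFirstTwo, binaryForests]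
  rw [binaryForests_succ_succ, Set.ncard_union_eq hdisj ((binaryForests_finite n m).image _)
    ((binaryForests_finite n (m + 2)).image _), Set.ncard_image_of_injective _ List.cons_injective,
    (joinFirstTwo_injOn.mono hlong).ncard_image]

lemma mul_ncard_binaryForests : ∀ n m : ℕ, n * (binaryForests m n).ncard = scaledBallot m n
  | 0, m => by rw [zero_mul, scaledBallot_zero_right]
  | n + 1, 0 => by simp [binaryForests_zero_succ, scaledBallot]
  -- `add_one_mul_scaledBallot_add` carries no information at `n = 0`: compute this step directly.
  | 1, m + 1 => by
    rw [one_mul, ncard_binaryForests_succ_succ, binaryForests_succ_zero, Set.ncard_empty, add_zero]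
    rcases m with _ | m
    · simp [binaryForests_zero_zero, scaledBallot]
    · rw [binaryForests_succ_zero, Set.ncard_empty, scaledBallot]
      split_ifs
      · rw [Nat.choose_eq_zero_of_lt (by omega), mul_zero]
      · rfl
  | n + 2, m + 1 => by
    apply Nat.eq_of_mul_eq_mul_left (Nat.add_one_pos n)
    rw [← add_one_mul_scaledBallot_add, ← mul_ncard_binaryForests (n + 1) m,
      ← mul_ncard_binaryForests (n + 1) (m + 2), ncard_binaryForests_succ_succ]
    ring

end PlaneTree

theorem binary_forest_count_general (m n : ℕ) :
    n * Nat.card {f : List PlaneTree //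
        f.length = m ∧ (∀ t ∈ f, t.IsBinary) ∧ (f.map PlaneTree.size).sum = n} =
      if (n + m) % 2 = 0 then m * Nat.choose n ((n + m) / 2) else 0 := by
  exact PlaneTree.mul_ncard_binaryForests n m

/-- The number of forests of `m` binary trees with `n` nodes in total equals
`(m/n) · C(n, (n+m)/2)`, with the convention that the binomial coefficient is `0`
if `(n+m)/2` is not a nonnegative integer. -/
theorem binary_forest_count (m n : ℕ) (hn : 0 < n) :
    n * Nat.card {f : List PlaneTree //
        f.length = m ∧ (∀ t ∈ f, t.IsBinary) ∧ (f.map PlaneTree.size).sum = n} =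
      if (n + m) % 2 = 0 then m * Nat.choose n ((n + m) / 2) else 0 :=
  binary_forest_count_general m n
end

section
/- The number of forests consisting of m ternary trees with n nodes in total equals (m/n) · C(n, (n-m)/3), with the convention that the binomial coefficient is 0 if (n-m)/3 is not a nonnegative integer. -/
/-!
Decomposing the first tree of a forest (a leaf is dropped, an internal node is replaced by its
three subtrees) is a bijection between forests of `m + 1` trees with `n + 1` nodes and forests of
`m` trees with `n` nodes or of `m + 3` trees with `n` nodes. The numbers `m * C(n, (n - m) / 3)`
satisfy the same recurrence after multiplication by `n`; with `n = m + 3 (j + 1)` this is Pascal's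
rule together with `C(n, j + 1) * (j + 1) = C(n, j) * (n - j)`.
-/

namespace PlaneTree

lemma one_le_size (t : PlaneTree) : 1 ≤ t.size := by
  cases t
  rw [size_node]
  omega

lemma length_le_sum_size (f : List PlaneTree) : f.length ≤ (f.map size).sum := by
  simpa using List.length_le_sum_of_one_le (f.map size) (by simpa using fun t _ => one_le_size t)

def TernaryForest (m n : ℕ) : Type :=
  {f : List PlaneTree // f.length = m ∧ (∀ t ∈ f, t.IsTernary) ∧ (f.map size).sum = n}

namespace TernaryForest

instance : Unique (TernaryForest 0 0) where
  default := ⟨[], by simp⟩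
  uniq := fun ⟨f, hf, _⟩ => Subtype.ext (List.length_eq_zero_iff.mp hf)

instance (m : ℕ) : IsEmpty (TernaryForest (m + 1) 0) :=
  ⟨fun ⟨f, hlen, _, hsum⟩ => by have := length_le_sum_size f; omega⟩

instance (n : ℕ) : IsEmpty (TernaryForest 0 (n + 1)) :=
  ⟨fun ⟨f, hlen, _, hsum⟩ => by simp_all [List.length_eq_zero_iff.mp hlen]⟩

def splitHead (m n : ℕ) :
    TernaryForest (m + 1) (n + 1) → TernaryForest m n ⊕ TernaryForest (m + 3) n
  | ⟨node [] :: f, h⟩ => .inl ⟨f, by simp_all [size_node]; omega⟩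
  | ⟨node [a, b, c] :: f, h⟩ => .inr ⟨a :: b :: c :: f, by
      obtain ⟨hlen, hter, hsum⟩ := h
      obtain _ | ⟨_, _, _, ha, hb, hc⟩ := hter _ List.mem_cons_self
      refine ⟨by simpa using hlen, ?_, by simp_all [size_node]; omega⟩
      simp_all⟩
  | ⟨[], h⟩ => nomatch h.1
  | ⟨node [_] :: _, h⟩ | ⟨node [_, _] :: _, h⟩
  | ⟨node (_ :: _ :: _ :: _ :: _) :: _, h⟩ =>
      nomatch h.2.1 _ List.mem_cons_self

def joinHead (m n : ℕ) :
    TernaryForest m n ⊕ TernaryForest (m + 3) n → TernaryForest (m + 1) (n + 1)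
  | .inl ⟨f, h⟩ => ⟨node [] :: f, by simp_all [size_node, IsTernary.leaf]; omega⟩
  | .inr ⟨a :: b :: c :: f, h⟩ => ⟨node [a, b, c] :: f, by
      obtain ⟨hlen, hter, hsum⟩ := h
      refine ⟨by simpa using hlen, ?_, by simp_all [size_node]; omega⟩
      simp_all [IsTernary.node3]⟩
  | .inr ⟨[], h⟩ | .inr ⟨[_], h⟩ | .inr ⟨[_, _], h⟩ => nomatch h.1

def succSuccEquiv (m n : ℕ) :
    TernaryForest (m + 1) (n + 1) ≃ TernaryForest m n ⊕ TernaryForest (m + 3) n where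
  toFun := splitHead m n
  invFun := joinHead m n
  left_inv := by
    rintro ⟨_ | ⟨t, f⟩, hlen, hter, -⟩
    · simp at hlen
    · obtain _ | ⟨_, _, _, _, _, _⟩ := hter t List.mem_cons_self <;> rfl
  right_inv := by
    rintro (_ | ⟨f, hlen, -⟩)
    · rfl
    · match f, hlen with
      | _ :: _ :: _ :: _, _ => rfl

instance (m n : ℕ) : Finite (TernaryForest m n) := by
  induction n generalizing m with
  | zero => rcases m with _ | m <;> infer_instance
  | succ n ih =>
    rcases m with _ | m
    · infer_instance
    · exact Finite.of_equiv _ (succSuccEquiv m n).symm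

lemma card_succ_succ (m n : ℕ) : Nat.card (TernaryForest (m + 1) (n + 1)) =
    Nat.card (TernaryForest m n) + Nat.card (TernaryForest (m + 3) n) := by
  rw [Nat.card_congr (succSuccEquiv m n), Nat.card_sum]

end TernaryForest

end PlaneTree

def ternaryForestNumerator (m n : ℕ) : ℕ :=
  if m ≤ n ∧ (n - m) % 3 = 0 then m * n.choose ((n - m) / 3) else 0

lemma ternaryForestNumerator_eq_mul_choose {m n k : ℕ} (h : n = m + 3 * k) :
    ternaryForestNumerator m n = m * n.choose k := by
  subst h
  simp [ternaryForestNumerator]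

lemma ternaryForestNumerator_eq_zero {m n : ℕ} (h : ∀ k, n ≠ m + 3 * k) :
    ternaryForestNumerator m n = 0 :=
  if_neg fun ⟨hle, hmod⟩ => h ((n - m) / 3) (by omega)

lemma choose_ternary_identity (m j : ℕ) :
    (m + 3 * j + 3) * ((m + 1) * (m + 3 * j + 4).choose (j + 1)) =
      (m + 3 * j + 4) *
        (m * (m + 3 * j + 3).choose (j + 1) + (m + 3) * (m + 3 * j + 3).choose j) := by
  have hratio := Nat.choose_succ_right_eq (m + 3 * j + 3) j
  rw [show m + 3 * j + 3 - j = m + 2 * j + 3 by omega] at hratio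
  rw [Nat.choose_succ_succ (m + 3 * j + 3) j]
  linear_combination 3 * hratio

lemma ternaryForestNumerator_recurrence (m n : ℕ) :
    n * ternaryForestNumerator (m + 1) (n + 1) =
      (n + 1) * (ternaryForestNumerator m n + ternaryForestNumerator (m + 3) n) := by
  by_cases h : ∃ k, n = m + 3 * k
  · obtain ⟨k, rfl⟩ := h
    rcases k with _ | j
    · rw [ternaryForestNumerator_eq_mul_choose (k := 0) (by ring),
        ternaryForestNumerator_eq_mul_choose (k := 0) (by ring),
        ternaryForestNumerator_eq_zero (m := m + 3) (fun k => by omega)]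
      simp only [mul_zero, add_zero, Nat.choose_zero_right]
      ring
    · rw [ternaryForestNumerator_eq_mul_choose (m := m + 1) (k := j + 1) (by ring),
        ternaryForestNumerator_eq_mul_choose rfl,
        ternaryForestNumerator_eq_mul_choose (m := m + 3) (k := j) (by ring),
        show m + 3 * (j + 1) = m + 3 * j + 3 by ring]
      exact choose_ternary_identity m j
  · push Not at h
    rw [ternaryForestNumerator_eq_zero h,
      ternaryForestNumerator_eq_zero (m := m + 1) (fun k hk => h k (by omega)),
      ternaryForestNumerator_eq_zero (m := m + 3) (fun k hk => h (k + 1) (by omega))]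
    simp

theorem ternaryForestNumerator_eq_mul_of_recurrence (G : ℕ → ℕ → ℕ)
    (h_zero_zero : G 0 0 = 1) (h_succ_zero : ∀ m, G (m + 1) 0 = 0)
    (h_zero_succ : ∀ n, G 0 (n + 1) = 0)
    (h_succ_succ : ∀ m n, G (m + 1) (n + 1) = G m n + G (m + 3) n) (m n : ℕ) :
    ternaryForestNumerator m n = n * G m n := by
  induction n generalizing m with
  | zero => simp [ternaryForestNumerator]
  | succ n ih =>
    rcases m with _ | m
    · simp [ternaryForestNumerator, h_zero_succ]
    -- at `n = 0` the recurrence of the numerators is `0 = 0`, so `n = 1` is computed directly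
    rcases n with _ | n
    · rcases m with _ | m <;> simp [ternaryForestNumerator, h_succ_succ, h_zero_zero, h_succ_zero]
    refine Nat.eq_of_mul_eq_mul_left n.add_one_pos ?_
    rw [ternaryForestNumerator_recurrence, ih, ih, h_succ_succ m (n + 1)]
    ring

theorem ternary_forest_count_general (m n : ℕ) :
    n * Nat.card {f : List PlaneTree //
        f.length = m ∧ (∀ t ∈ f, t.IsTernary) ∧ (f.map PlaneTree.size).sum = n} =
      if m ≤ n ∧ (n - m) % 3 = 0 then m * Nat.choose n ((n - m) / 3) else 0 :=
  (ternaryForestNumerator_eq_mul_of_recurrence (fun m n => Nat.card (PlaneTree.TernaryForest m n))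
    (by simp) (fun _ => by simp) (fun _ => by simp) PlaneTree.TernaryForest.card_succ_succ m n).symm

/-- The number of forests of `m` ternary trees with `n` nodes in total equals
`(m/n) · C(n, (n-m)/3)`, with the convention that the binomial coefficient is `0`
if `(n-m)/3` is not a nonnegative integer. -/
theorem ternary_forest_count (m n : ℕ) (hn : 0 < n) :
    n * Nat.card {f : List PlaneTree //
        f.length = m ∧ (∀ t ∈ f, t.IsTernary) ∧ (f.map PlaneTree.size).sum = n} =
      if m ≤ n ∧ (n - m) % 3 = 0 then m * Nat.choose n ((n - m) / 3) else 0 :=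
  ternary_forest_count_general m n
end

section
/- Let T_n be a uniformly random ternary tree with 3n+1 nodes and let u be a uniformly random internal node of T_n. Then the size |T_u| of the fringe subtree rooted at u converges in distribution as n → ∞ to a random variable K with P(K = 3k+1) = (2^{2k+1} / (3^{3k}(3k+1))) · C(3k+1, k) for k ≥ 1. -/
open Filter

/-!
A ternary tree with `n` internal nodes is determined by its preorder Łukasiewicz word, in which
an internal node has weight `2` and a leaf weight `-1`. By the cycle lemma, each of the
`C(3n+1, n)` words with `n` internal letters and `2n+1` leaf letters is, in exactly one way, a
rotation of exactly one such code; hence there are `t n = C(3n+1, n) / (3n+1)` ternary trees.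
Marking an internal node gives `t n * n` pairs. Cutting out the fringe subtree at the marked
node, when it has `k` internal nodes, leaves a tree with `n - k` internal nodes and a marked
leaf, so there are `t (n-k) * (2(n-k)+1) * t k` such pairs. Since `t m / t (m+1) → 4/27`, the
proportion tends to `2 * t k * (4/27)^k`.
-/

namespace PlaneTree

@[simp] lemma size_leaf : size (node []) = 1 := by simp [size]

@[simp] lemma size_node3 (a b c : PlaneTree) :
    size (node [a, b, c]) = size a + size b + size c + 1 := by
  simp [size]; ring

@[simp] lemma numInternal_leaf : numInternal (node []) = 0 := by simp [numInternal]

@[simp] lemma numInternal_node3 (a b c : PlaneTree) :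
    numInternal (node [a, b, c]) = numInternal a + numInternal b + numInternal c + 1 := by
  simp [numInternal]; ring

lemma IsTernary.size_eq {T : PlaneTree} (hT : IsTernary T) : size T = 3 * numInternal T + 1 := by
  induction hT <;> simp [*]; ring

@[simp] lemma subtreeAt_nil (T : PlaneTree) : subtreeAt [] T = some T := rfl

@[simp] lemma subtreeAt_cons_leaf (i : ℕ) (r : List ℕ) :
    subtreeAt (i :: r) (node []) = none := by
  simp [subtreeAt, children]

@[simp] lemma subtreeAt_cons_node (i : ℕ) (r : List ℕ) (ts : List PlaneTree) :
    subtreeAt (i :: r) (node ts) = ts[i]?.bind (subtreeAt r) := rfl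

lemma IsTernary.subtreeAt {T S : PlaneTree} {a : List ℕ} (hT : IsTernary T)
    (h : T.subtreeAt a = some S) : IsTernary S := by
  induction a generalizing T with
  | nil => simp_all
  | cons i r ih =>
    cases hT with
    | leaf => simp at h
    | node3 x y z hx hy hz =>
      rcases i with _ | _ | _ | i <;> simp at h
      exacts [ih hx h, ih hy h, ih hz h]

def ternaryTrees (n : ℕ) : Set PlaneTree := {T | IsTernary T ∧ numInternal T = n}

lemma mem_ternaryTrees_iff_size {T : PlaneTree} {n : ℕ} :
    T ∈ ternaryTrees n ↔ IsTernary T ∧ size T = 3 * n + 1 := by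
  refine ⟨fun ⟨hT, hn⟩ => ⟨hT, hn ▸ hT.size_eq⟩, fun ⟨hT, hn⟩ => ⟨hT, ?_⟩⟩
  rw [hT.size_eq] at hn
  omega

end PlaneTree

lemma List.prefix_append_cases {α : Type*} {p x y : List α} (h : p <+: x ++ y) :
    p <+: x ∨ ∃ q, q <+: y ∧ p = x ++ q := by
  rcases List.prefix_or_prefix_of_prefix h (List.prefix_append x y) with hpx | ⟨q, rfl⟩
  · exact Or.inl hpx
  · exact Or.inr ⟨q, (List.prefix_append_right_inj x).1 h, rfl⟩

lemma List.exists_shortest_prefix {α : Type*} {w : List α} (P : List α → Prop)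
    (h : ∃ p, p <+: w ∧ P p) :
    ∃ u, u <+: w ∧ P u ∧ ∀ p, p <+: u → p ≠ u → ¬ P p := by
  obtain ⟨u, ⟨hu, hPu⟩, hmin⟩ := (measure List.length).wf.has_min {p | p <+: w ∧ P p} h
  refine ⟨u, hu, hPu, fun p hp hne hPp => hmin p ⟨hp.trans hu, hPp⟩ ?_⟩
  exact lt_of_le_of_ne hp.length_le (mt hp.eq_of_length hne)

/-- `true` stands for an internal node of a ternary tree and `false` for a leaf. -/
def codeWeight (w : List Bool) : ℤ := 2 * w.count true - w.count false

@[simp] lemma codeWeight_nil : codeWeight [] = 0 := by simp [codeWeight]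

@[simp] lemma codeWeight_append (u v : List Bool) :
    codeWeight (u ++ v) = codeWeight u + codeWeight v := by
  simp [codeWeight]; ring

@[simp] lemma codeWeight_cons (x : Bool) (w : List Bool) :
    codeWeight (x :: w) = (if x then 2 else -1) + codeWeight w := by
  cases x <;> simp [codeWeight] <;> ring

lemma codeWeight_rotate (w : List Bool) (n : ℕ) : codeWeight (w.rotate n) = codeWeight w := by
  simp [codeWeight, (w.rotate_perm n).count_eq]

/-- The Łukasiewicz words of ternary trees. -/
def IsTernaryCode (w : List Bool) : Prop :=
  (∀ p, p <+: w → p ≠ w → 0 ≤ codeWeight p) ∧ codeWeight w = -1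

lemma exists_isTernaryCode_prefix {w : List Bool} (h : codeWeight w ≤ -1) :
    ∃ u v, w = u ++ v ∧ IsTernaryCode u := by
  obtain ⟨u, ⟨v, rfl⟩, hu, hshort⟩ :=
    List.exists_shortest_prefix (fun p => codeWeight p ≤ -1) ⟨w, List.prefix_refl w, h⟩
  refine ⟨u, v, rfl, fun p hp hne => by linarith [hshort p hp hne], le_antisymm hu ?_⟩
  -- the weight drops by at most one per letter
  have hne : u ≠ [] := by rintro rfl; simp at hu
  rw [← List.dropLast_append_getLast hne] at hu hshort ⊢
  have := hshort _ (List.prefix_append _ _) (by simp)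
  cases u.getLast hne <;> simp at this ⊢ <;> omega

namespace IsTernaryCode

variable {u v : List Bool}

lemma eq_of_prefix (hu : IsTernaryCode u) (hv : IsTernaryCode v) (h : u <+: v) : u = v := by
  by_contra hne
  have := hv.1 u h hne
  have := hu.2
  omega

lemma eq_of_append_eq {r s : List Bool} (hu : IsTernaryCode u) (hv : IsTernaryCode v)
    (h : u ++ r = v ++ s) : u = v := by
  rcases List.prefix_or_prefix_of_prefix (List.prefix_append u r) (h ▸ List.prefix_append v s)
    with h' | h'
  · exact hu.eq_of_prefix hv h'
  · exact (hv.eq_of_prefix hu h').symm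

lemma neg_one_le_codeWeight (hu : IsTernaryCode u) {p : List Bool} (hp : p <+: u) :
    -1 ≤ codeWeight p := by
  by_cases h : p = u
  · rw [h, hu.2]
  · have := hu.1 p hp h; omega

lemma leaf : IsTernaryCode [false] := by
  refine ⟨fun p hp hne => ?_, by simp⟩
  rcases List.prefix_cons_iff.1 hp with rfl | ⟨q, rfl, hq⟩
  · simp
  · simp_all

lemma node3 {a b c : List Bool} (ha : IsTernaryCode a) (hb : IsTernaryCode b)
    (hc : IsTernaryCode c) : IsTernaryCode (true :: (a ++ b ++ c)) := by
  refine ⟨fun p hp hne => ?_, by simp [ha.2, hb.2, hc.2]⟩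
  rcases List.prefix_cons_iff.1 hp with rfl | ⟨q, rfl, hq⟩
  · simp
  suffices -2 ≤ codeWeight q by simp; omega
  rw [List.append_assoc] at hq hne
  rcases List.prefix_append_cases hq with hqa | ⟨q₁, hq₁, rfl⟩
  · linarith [ha.neg_one_le_codeWeight hqa]
  rcases List.prefix_append_cases hq₁ with hqb | ⟨q₂, hq₂, rfl⟩
  · simp [ha.2]; linarith [hb.neg_one_le_codeWeight hqb]
  · simp [ha.2, hb.2]; linarith [hc.1 q₂ hq₂ (by rintro rfl; simp at hne)]

lemma eq_leaf {w : List Bool} (h : IsTernaryCode (false :: w)) : w = [] := by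
  simpa using leaf.eq_of_prefix h (by simp)

lemma exists_node3 {w : List Bool} (h : IsTernaryCode (true :: w)) :
    ∃ a b c, w = a ++ b ++ c ∧ IsTernaryCode a ∧ IsTernaryCode b ∧ IsTernaryCode c := by
  have hw : codeWeight w = -3 := by have := h.2; simp at this; omega
  obtain ⟨a, w, rfl, ha⟩ := exists_isTernaryCode_prefix (w := w) (by omega)
  obtain ⟨b, w, rfl, hb⟩ := exists_isTernaryCode_prefix (w := w) (by simp [ha.2] at hw; omega)
  obtain ⟨c, w, rfl, hc⟩ := exists_isTernaryCode_prefix (w := w)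
    (by simp [ha.2, hb.2] at hw; omega)
  refine ⟨a, b, c, ?_, ha, hb, hc⟩
  have := (node3 ha hb hc).eq_of_prefix h ⟨w, by simp⟩
  simpa using this.symm

lemma eq_nil_or_eq_nil_of_append_swap (h : IsTernaryCode (u ++ v)) (h' : IsTernaryCode (v ++ u)) :
    u = [] ∨ v = [] := by
  by_contra! huv
  have hu := h.1 u (List.prefix_append u v) (by simpa using huv.2)
  have hv := h'.1 v (List.prefix_append v u) (by simpa using huv.1)
  have := h.2
  simp at this
  omega

lemma eq_zero_of_rotate (hv : IsTernaryCode v) {r : ℕ} (hr : r < v.length)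
    (h : IsTernaryCode (v.rotate r)) : r = 0 := by
  rw [List.rotate_eq_drop_append_take hr.le] at h
  rw [← List.take_append_drop r v] at hv
  rcases hv.eq_nil_or_eq_nil_of_append_swap h with h0 | h0
  · exact (List.take_eq_nil_iff.1 h0).resolve_right (by rintro rfl; simp at hr)
  · simp at h0; omega

lemma rotate_eq_rotate (hu : IsTernaryCode u) (hv : IsTernaryCode v) {i j : ℕ}
    (hi : i < u.length) (hj : j < v.length) (h : u.rotate i = v.rotate j) : i = j ∧ u = v := by
  wlog hij : i ≤ j generalizing u v i j
  · exact (this hv hu hj hi h.symm (by omega)).imp Eq.symm Eq.symm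
  obtain ⟨d, rfl⟩ := Nat.exists_eq_add_of_le hij
  have huv : u = v.rotate d := by
    rw [← List.rotate_eq_rotate (n := i), h, List.rotate_rotate, add_comm]
  have hd : d = 0 := hv.eq_zero_of_rotate (by omega) (huv ▸ hu)
  simp [huv, hd]

end IsTernaryCode

lemma isTernaryCode_append_swap {u v : List Bool} (hw : codeWeight (u ++ v) = -1)
    (hmin : ∀ p, p <+: u ++ v → codeWeight u ≤ codeWeight p)
    (hfirst : ∀ p, p <+: u → p ≠ u → codeWeight u < codeWeight p) :
    IsTernaryCode (v ++ u) := by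
  refine ⟨fun p hp hne => ?_, by simpa [add_comm] using hw⟩
  rw [codeWeight_append] at hw
  rcases List.prefix_append_cases hp with hpv | ⟨q, hq, rfl⟩
  · have := hmin (u ++ p) ((List.prefix_append_right_inj u).2 hpv)
    simp at this
    omega
  · have := hfirst q hq (by rintro rfl; exact hne rfl)
    simp
    omega

lemma exists_isTernaryCode_rotate_eq {w : List Bool} (hw : codeWeight w = -1) :
    ∃ c, IsTernaryCode c ∧ ∃ i < c.length, c.rotate i = w := by
  have hprefixes : Set.Finite {p | p <+: w} := by
    simpa [List.mem_inits] using w.inits.finite_toSet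
  obtain ⟨m, hm, hmin⟩ :=
    Set.exists_min_image _ codeWeight hprefixes ⟨w, List.prefix_refl w⟩
  obtain ⟨u, ⟨v, rfl⟩, hu, hfirst⟩ := List.exists_shortest_prefix
    (fun p => ∀ q, q <+: w → codeWeight p ≤ codeWeight q) ⟨m, hm, hmin⟩
  have hu_ne : u ≠ [] := by
    rintro rfl
    have := hu _ (List.prefix_refl _)
    simp at this hw
    omega
  refine ⟨v ++ u, isTernaryCode_append_swap hw hu fun p hp hne => ?_, v.length,
    by simpa using List.length_pos_iff.2 hu_ne, List.rotate_append_length_eq v u⟩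
  obtain ⟨q, hq, hlt⟩ := by simpa using hfirst p hp hne
  exact lt_of_le_of_lt (hu q hq) hlt

def wordsWithCounts (a b : ℕ) : Set (List Bool) := {w | w.count true = a ∧ w.count false = b}

lemma setOf_count_eq_and_count_not_eq_zero (x : Bool) (n : ℕ) :
    {w : List Bool | w.count x = n ∧ w.count (!x) = 0} = {List.replicate n x} := by
  ext w
  simp only [Set.mem_ofPred_eq, Set.mem_singleton_iff]
  constructor
  · rintro ⟨hx, hnx⟩
    refine List.eq_replicate_iff.2 ⟨?_, fun y hy => ?_⟩
    · cases x <;> simp_all [← List.count_false_add_count_true]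
    · cases x <;> cases y <;> simp_all [List.count_eq_zero]
  · rintro rfl
    cases x <;> simp [List.count_replicate]

lemma wordsWithCounts_succ_succ (a b : ℕ) :
    wordsWithCounts (a + 1) (b + 1) =
      List.cons true '' wordsWithCounts a (b + 1) ∪
        List.cons false '' wordsWithCounts (a + 1) b := by
  ext (_ | ⟨_ | _, w⟩) <;> simp [wordsWithCounts]

lemma encard_wordsWithCounts (a b : ℕ) : (wordsWithCounts a b).encard = (a + b).choose a := by
  induction a generalizing b with
  | zero =>
    have := setOf_count_eq_and_count_not_eq_zero false b
    simp_all [wordsWithCounts, and_comm]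
  | succ a iha =>
    induction b with
    | zero =>
      have := setOf_count_eq_and_count_not_eq_zero true (a + 1)
      simp_all [wordsWithCounts]
    | succ b ihb =>
      rw [wordsWithCounts_succ_succ, Set.encard_union_eq, List.cons_injective.encard_image,
        List.cons_injective.encard_image, iha, ihb]
      · rw [show a + 1 + (b + 1) = a + b + 1 + 1 by ring, Nat.choose_succ_succ,
          show a + (b + 1) = a + b + 1 by ring, show a + 1 + b = a + b + 1 by ring]
        push_cast; rfl
      · rw [Set.disjoint_left]; rintro _ ⟨_, _, rfl⟩ ⟨_, _, h⟩; simp at h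

namespace PlaneTree

def code : PlaneTree → List Bool
  | node [a, b, c] => true :: (code a ++ code b ++ code c)
  | _ => [false]

@[simp] lemma code_leaf : code (node []) = [false] := rfl

@[simp] lemma code_node3 (a b c : PlaneTree) :
    code (node [a, b, c]) = true :: (code a ++ code b ++ code c) := rfl

namespace IsTernary

variable {T : PlaneTree}

lemma isTernaryCode_code (hT : IsTernary T) : IsTernaryCode (code T) := by
  induction hT with
  | leaf => exact IsTernaryCode.leaf
  | node3 _ _ _ _ _ _ ha hb hc => exact IsTernaryCode.node3 ha hb hc

lemma count_true_code (hT : IsTernary T) : (code T).count true = numInternal T := by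
  induction hT <;> simp [*]; ring

lemma count_false_code (hT : IsTernary T) : (code T).count false = 2 * numInternal T + 1 := by
  induction hT <;> simp [*]; ring

lemma length_code (hT : IsTernary T) : (code T).length = 3 * numInternal T + 1 := by
  rw [← List.count_false_add_count_true, hT.count_true_code, hT.count_false_code]; ring

lemma code_inj {S : PlaneTree} (hS : IsTernary S) (hT : IsTernary T) (h : code S = code T) :
    S = T := by
  induction hS generalizing T with
  | leaf => cases hT <;> simp_all
  | node3 a b c ha hb hc iha ihb ihc =>
    cases hT with
    | leaf => simp at h
    | node3 a' b' c' ha' hb' hc' =>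
      simp only [code_node3, List.cons.injEq, true_and, List.append_assoc] at h
      have hca := ha.isTernaryCode_code.eq_of_append_eq ha'.isTernaryCode_code h
      rw [hca, List.append_cancel_left_eq] at h
      have hcb := hb.isTernaryCode_code.eq_of_append_eq hb'.isTernaryCode_code h
      rw [hcb, List.append_cancel_left_eq] at h
      rw [iha ha' hca, ihb hb' hcb, ihc hc' h]

end IsTernary

theorem exists_code_eq : ∀ {w : List Bool}, IsTernaryCode w → ∃ T, IsTernary T ∧ code T = w
  | [], hw => by simpa using hw.2
  | false :: w, hw => ⟨node [], .leaf, by simp [hw.eq_leaf]⟩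
  | true :: w, hw => by
    obtain ⟨a, b, c, rfl, ha, hb, hc⟩ := hw.exists_node3
    obtain ⟨A, hA, rfl⟩ := exists_code_eq ha
    obtain ⟨B, hB, rfl⟩ := exists_code_eq hb
    obtain ⟨C, hC, rfl⟩ := exists_code_eq hc
    exact ⟨node [A, B, C], .node3 A B C hA hB hC, rfl⟩
termination_by w => w.length

lemma image_rotate_code (n : ℕ) :
    (fun p : PlaneTree × ℕ => (code p.1).rotate p.2) ''
        (ternaryTrees n ×ˢ {i | i < 3 * n + 1}) = wordsWithCounts n (2 * n + 1) := by
  ext w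
  simp only [Set.mem_image, Set.mem_prod, ternaryTrees, wordsWithCounts, Set.mem_ofPred_eq,
    Prod.exists]
  constructor
  · rintro ⟨T, i, ⟨⟨hT, rfl⟩, -⟩, rfl⟩
    simp [(List.rotate_perm _ _).count_eq, hT.count_true_code, hT.count_false_code]
  · rintro ⟨htrue, hfalse⟩
    obtain ⟨c, hc, i, hi, rfl⟩ := exists_isTernaryCode_rotate_eq (w := w)
      (by simp [codeWeight, htrue, hfalse])
    obtain ⟨T, hT, rfl⟩ := exists_code_eq hc
    have hn : numInternal T = n := by
      rw [← hT.count_true_code, ← htrue, (List.rotate_perm _ _).count_eq]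
    exact ⟨T, i, ⟨⟨hT, hn⟩, by simpa [hT.length_code, hn] using hi⟩, rfl⟩

lemma injOn_rotate_code (n : ℕ) :
    Set.InjOn (fun p : PlaneTree × ℕ => (code p.1).rotate p.2)
      (ternaryTrees n ×ˢ {i | i < 3 * n + 1}) := by
  rintro ⟨S, i⟩ ⟨⟨hS, hSn⟩, hi⟩ ⟨T, j⟩ ⟨⟨hT, hTn⟩, hj⟩ h
  dsimp only [Set.mem_ofPred_eq] at hS hSn hi hT hTn hj h
  obtain ⟨rfl, hcode⟩ := hS.isTernaryCode_code.rotate_eq_rotate hT.isTernaryCode_code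
    (by rwa [hS.length_code, hSn]) (by rwa [hT.length_code, hTn]) h
  rw [hS.code_inj hT hcode]

theorem encard_ternaryTrees_mul (n : ℕ) :
    (ternaryTrees n).encard * (3 * n + 1) = (3 * n + 1).choose n := by
  have := (injOn_rotate_code n).encard_image
  rw [image_rotate_code, encard_wordsWithCounts, Set.encard_prod, Set.Nat.encard_range] at this
  rw [show n + (2 * n + 1) = 3 * n + 1 by ring] at this
  exact_mod_cast this.symm

lemma ternaryTrees_finite (n : ℕ) : (ternaryTrees n).Finite := by
  rw [← Set.encard_ne_top_iff]
  intro htop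
  have := encard_ternaryTrees_mul n
  rw [htop, ENat.top_mul (by simp)] at this
  exact ENat.top_ne_natCast _ this

end PlaneTree

lemma Set.encard_setOf_fst_mem_snd_mem {α β : Type*} {S : Set α} (hS : S.Finite)
    {A : α → Set β} {c : ℕ∞} (hA : ∀ a ∈ S, (A a).encard = c) :
    {p : α × β | p.1 ∈ S ∧ p.2 ∈ A p.1}.encard = S.encard * c := by
  induction S, hS using Set.Finite.induction_on with
  | empty => simp
  | @insert a S haS _ ih =>
    have hsplit : {p : α × β | p.1 ∈ insert a S ∧ p.2 ∈ A p.1} =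
        Prod.mk a '' A a ∪ {p | p.1 ∈ S ∧ p.2 ∈ A p.1} := by
      ext ⟨b, y⟩
      simp only [Set.mem_insert_iff, Set.mem_union, Set.mem_image, Prod.mk.injEq,
        Set.mem_ofPred_eq]
      constructor
      · rintro ⟨rfl | hb, hy⟩
        exacts [Or.inl ⟨y, hy, rfl, rfl⟩, Or.inr ⟨hb, hy⟩]
      · rintro (⟨y, hy, rfl, rfl⟩ | ⟨hb, hy⟩)
        exacts [⟨Or.inl rfl, hy⟩, ⟨Or.inr hb, hy⟩]
    have hdisj : Disjoint (Prod.mk a '' A a) {p | p.1 ∈ S ∧ p.2 ∈ A p.1} := by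
      rw [Set.disjoint_left]
      rintro _ ⟨y, -, rfl⟩ ⟨ha, -⟩
      exact haS ha
    rw [hsplit, Set.encard_union_eq hdisj, (Prod.mk_right_injective a).encard_image,
      hA a (Set.mem_insert a S), ih fun b hb => hA b (Set.mem_insert_of_mem a hb),
      Set.encard_insert_of_notMem haS, add_mul, one_mul, add_comm]

namespace PlaneTree

def nodesWhere (P : PlaneTree → Prop) (T : PlaneTree) : Set (List ℕ) :=
  {a | ∃ S, T.subtreeAt a = some S ∧ P S}

section

variable (P : PlaneTree → Prop)

lemma nodesWhere_leaf : nodesWhere P (node []) = {a | a = [] ∧ P (node [])} := by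
  ext (_ | _) <;> simp [nodesWhere]

lemma nodesWhere_node3 (x y z : PlaneTree) :
    nodesWhere P (node [x, y, z]) = {a | a = [] ∧ P (node [x, y, z])} ∪
      (List.cons 0 '' nodesWhere P x ∪ List.cons 1 '' nodesWhere P y ∪
        List.cons 2 '' nodesWhere P z) := by
  ext (_ | ⟨_ | _ | _ | i, a⟩) <;> simp [nodesWhere]

lemma encard_nodesWhere_node3 (x y z : PlaneTree) :
    (nodesWhere P (node [x, y, z])).encard = {a : List ℕ | a = [] ∧ P (node [x, y, z])}.encard +
      ((nodesWhere P x).encard + (nodesWhere P y).encard + (nodesWhere P z).encard) := by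
  have hcons (i : ℕ) := (List.cons_injective (a := i)).encard_image
  rw [nodesWhere_node3, Set.encard_union_eq, Set.encard_union_eq, Set.encard_union_eq,
    hcons, hcons, hcons]
  all_goals
    rw [Set.disjoint_left]
    aesop

end

namespace IsTernary

variable {T : PlaneTree}

lemma encard_nodesWhere_ne_leaf (hT : IsTernary T) :
    (nodesWhere (· ≠ node []) T).encard = numInternal T := by
  induction hT with
  | leaf => simp [nodesWhere_leaf]
  | node3 x y z _ _ _ hx hy hz =>
    rw [encard_nodesWhere_node3, hx, hy, hz]
    simp
    ring

lemma encard_nodesWhere_eq_leaf (hT : IsTernary T) :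
    (nodesWhere (· = node []) T).encard = 2 * numInternal T + 1 := by
  induction hT with
  | leaf => simp [nodesWhere_leaf]
  | node3 x y z _ _ _ hx hy hz =>
    rw [encard_nodesWhere_node3, hx, hy, hz]
    simp
    ring

end IsTernary

def markedTernaryTrees (n : ℕ) (P : PlaneTree → Prop) : Set (PlaneTree × List ℕ) :=
  {p | p.1 ∈ ternaryTrees n ∧ p.2 ∈ nodesWhere P p.1}

lemma encard_markedTernaryTrees_ne_leaf (n : ℕ) :
    (markedTernaryTrees n (· ≠ node [])).encard = (ternaryTrees n).encard * n :=
  Set.encard_setOf_fst_mem_snd_mem (ternaryTrees_finite n) fun _ ⟨hT, hTn⟩ =>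
    hTn ▸ hT.encard_nodesWhere_ne_leaf

lemma encard_markedTernaryTrees_eq_leaf (n : ℕ) :
    (markedTernaryTrees n (· = node [])).encard = (ternaryTrees n).encard * (2 * n + 1) :=
  Set.encard_setOf_fst_mem_snd_mem (ternaryTrees_finite n) fun _ ⟨hT, hTn⟩ =>
    hTn ▸ hT.encard_nodesWhere_eq_leaf

def graft : List ℕ → PlaneTree → PlaneTree → PlaneTree
  | [], _, S => S
  | i :: a, node ts, S => node (ts.set i (graft a (ts.getD i (node [])) S))

section

variable {T S X : PlaneTree} {a : List ℕ}

lemma subtreeAt_graft (h : T.subtreeAt a = some X) : (graft a T S).subtreeAt a = some S := by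
  induction a generalizing T with
  | nil => rfl
  | cons i a ih =>
    obtain ⟨ts⟩ := T
    rw [subtreeAt_cons_node, Option.bind_eq_some_iff] at h
    obtain ⟨U, hU, hUX⟩ := h
    obtain ⟨hi, rfl⟩ := List.getElem?_eq_some_iff.1 hU
    simp [graft, hi, ih hUX]

lemma graft_graft (h : T.subtreeAt a = some X) : graft a (graft a T S) X = T := by
  induction a generalizing T with
  | nil => simpa [graft] using h.symm
  | cons i a ih =>
    obtain ⟨ts⟩ := T
    rw [subtreeAt_cons_node, Option.bind_eq_some_iff] at h
    obtain ⟨U, hU, hUX⟩ := h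
    obtain ⟨hi, rfl⟩ := List.getElem?_eq_some_iff.1 hU
    simp [graft, hi, ih hUX]

lemma IsTernary.graft (hT : IsTernary T) (h : T.subtreeAt a = some X) (hS : IsTernary S) :
    IsTernary (T.graft a S) := by
  induction a generalizing T with
  | nil => exact hS
  | cons i a ih =>
    cases hT with
    | leaf => simp at h
    | node3 x y z hx hy hz =>
      rcases i with _ | _ | _ | i <;> simp at h
      exacts [.node3 _ _ _ (ih hx h) hy hz, .node3 _ _ _ hx (ih hy h) hz,
        .node3 _ _ _ hx hy (ih hz h)]

lemma IsTernary.numInternal_graft (hT : IsTernary T) (h : T.subtreeAt a = some X) :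
    numInternal (T.graft a S) + numInternal X = numInternal T + numInternal S := by
  induction a generalizing T with
  | nil => simp_all [PlaneTree.graft]; ring
  | cons i a ih =>
    cases hT with
    | leaf => simp at h
    | node3 x y z hx hy hz =>
      rcases i with _ | _ | _ | i <;> simp at h
      · have := ih hx h; simp [PlaneTree.graft]; omega
      · have := ih hy h; simp [PlaneTree.graft]; omega
      · have := ih hz h; simp [PlaneTree.graft]; omega

end

lemma image_graft (m k : ℕ) :
    (fun q : (PlaneTree × List ℕ) × PlaneTree => (q.1.1.graft q.1.2 q.2, q.1.2)) ''
        (markedTernaryTrees m (· = node []) ×ˢ ternaryTrees k) =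
      markedTernaryTrees (m + k) (· ∈ ternaryTrees k) := by
  ext ⟨T, a⟩
  simp only [Set.mem_image, Set.mem_prod, markedTernaryTrees, nodesWhere, ternaryTrees,
    Set.mem_ofPred_eq, Prod.exists, Prod.mk.injEq]
  constructor
  · rintro ⟨C, a, S, ⟨⟨⟨hC, rfl⟩, _, hleaf, rfl⟩, hS, rfl⟩, rfl, rfl⟩
    have := hC.numInternal_graft (S := S) hleaf
    simp only [numInternal_leaf] at this
    exact ⟨⟨hC.graft hleaf hS, by omega⟩, S, subtreeAt_graft hleaf, hS, rfl⟩
  · rintro ⟨⟨hT, hTn⟩, S, hS, hSt, rfl⟩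
    have := hT.numInternal_graft (S := node []) hS
    simp only [numInternal_leaf] at this
    exact ⟨T.graft a (node []), a, S,
      ⟨⟨⟨hT.graft hS .leaf, by omega⟩, _, subtreeAt_graft hS, rfl⟩, hSt, rfl⟩,
      graft_graft hS, rfl⟩

lemma injOn_graft (m k : ℕ) :
    Set.InjOn (fun q : (PlaneTree × List ℕ) × PlaneTree => (q.1.1.graft q.1.2 q.2, q.1.2))
      (markedTernaryTrees m (· = node []) ×ˢ ternaryTrees k) := by
  rintro ⟨⟨C, a⟩, S⟩ ⟨⟨-, _, hleaf, rfl⟩, -⟩ ⟨⟨C', a'⟩, S'⟩ ⟨⟨-, _, hleaf', rfl⟩, -⟩ h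
  simp only [Prod.mk.injEq] at h hleaf hleaf'
  obtain ⟨hgraft, rfl⟩ := h
  have hS : some S = some S' := by
    rw [← subtreeAt_graft hleaf, hgraft, subtreeAt_graft hleaf']
  rw [← graft_graft (S := S) hleaf, hgraft, graft_graft hleaf', Option.some_inj.1 hS]

theorem encard_markedTernaryTrees_mem (m k : ℕ) :
    (markedTernaryTrees (m + k) (· ∈ ternaryTrees k)).encard =
      (ternaryTrees m).encard * (2 * m + 1) * (ternaryTrees k).encard := by
  rw [← image_graft, (injOn_graft m k).encard_image, Set.encard_prod,
    encard_markedTernaryTrees_eq_leaf]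

end PlaneTree

lemma Nat.choose_three_mul_add_one_succ_mul (m : ℕ) :
    (3 * m + 4).choose (m + 1) * ((m + 1) * (2 * m + 2) * (2 * m + 3)) =
      (3 * m + 1).choose m * ((3 * m + 2) * (3 * m + 3) * (3 * m + 4)) := by
  have h1 := Nat.choose_mul_succ_eq (3 * m + 1) m
  have h2 := Nat.choose_mul_succ_eq (3 * m + 2) m
  have h3 := Nat.add_one_mul_choose_eq (3 * m + 3) m
  rw [show 3 * m + 1 + 1 - m = 2 * m + 2 by omega] at h1
  rw [show 3 * m + 2 + 1 - m = 2 * m + 3 by omega] at h2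
  simp only [show 3 * m + 1 + 1 = 3 * m + 2 by ring, show 3 * m + 2 + 1 = 3 * m + 3 by ring,
    show 3 * m + 3 + 1 = 3 * m + 4 by ring] at h1 h2 h3
  zify at h1 h2 h3 ⊢
  linear_combination (-(2 * (m : ℤ) + 2) * (2 * m + 3)) * h3 -
    (3 * (m : ℤ) + 4) * (2 * m + 2) * h2 - (3 * (m : ℤ) + 4) * (3 * m + 3) * h1

lemma tendsto_affine_div_affine (a b c d : ℝ) (hc : c ≠ 0) :
    Tendsto (fun n : ℕ => (a * n + b) / (c * n + d)) atTop (nhds (a / c)) := by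
  have hlim (x y : ℝ) : Tendsto (fun n : ℕ => x + y / n) atTop (nhds x) := by
    simpa using tendsto_const_nhds.add (tendsto_const_div_atTop_nhds_zero_nat y)
  refine ((hlim a b).div (hlim c d) hc).congr' ?_
  filter_upwards [eventually_ne_atTop 0] with n hn
  simp only [Pi.div_apply]
  field_simp

lemma tendsto_div_add_of_tendsto_div_succ {u : ℕ → ℝ} (hu : ∀ n, u n ≠ 0) {r : ℝ}
    (h : Tendsto (fun n => u n / u (n + 1)) atTop (nhds r)) (k : ℕ) :
    Tendsto (fun n => u n / u (n + k)) atTop (nhds (r ^ k)) := by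
  induction k with
  | zero => simp [div_self (hu _)]
  | succ k ih =>
    have hshift := h.comp (tendsto_add_atTop_nat k)
    refine (ih.mul hshift).congr fun n => ?_
    simp only [Function.comp_apply, ← add_assoc]
    field_simp [hu (n + k)]

namespace PlaneTree

noncomputable def numTernaryTrees (n : ℕ) : ℕ := (ternaryTrees n).ncard

lemma cast_numTernaryTrees (n : ℕ) : (numTernaryTrees n : ℕ∞) = (ternaryTrees n).encard :=
  (ternaryTrees_finite n).cast_ncard_eq

theorem numTernaryTrees_mul (n : ℕ) :
    numTernaryTrees n * (3 * n + 1) = (3 * n + 1).choose n := by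
  have := encard_ternaryTrees_mul n
  rw [← cast_numTernaryTrees] at this
  exact_mod_cast this

lemma numTernaryTrees_eq_div (n : ℕ) :
    (numTernaryTrees n : ℝ) = (3 * n + 1).choose n / (3 * n + 1) := by
  rw [eq_div_iff (by positivity)]
  exact_mod_cast numTernaryTrees_mul n

lemma numTernaryTrees_pos (n : ℕ) : 0 < numTernaryTrees n := by
  have h := numTernaryTrees_mul n
  have := Nat.choose_pos (show n ≤ 3 * n + 1 by omega)
  exact Nat.pos_of_ne_zero fun h0 => by simp [h0] at h; omega

lemma numTernaryTrees_div_succ (m : ℕ) :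
    (numTernaryTrees m : ℝ) / numTernaryTrees (m + 1) =
      (m + 1) / (3 * m + 1) * ((2 * m + 2) / (3 * m + 2)) * ((2 * m + 3) / (3 * m + 3)) := by
  have hchoose : ((3 * m + 4).choose (m + 1) : ℝ) * ((m + 1) * (2 * m + 2) * (2 * m + 3)) =
      (3 * m + 1).choose m * ((3 * m + 2) * (3 * m + 3) * (3 * m + 4)) := by
    exact_mod_cast Nat.choose_three_mul_add_one_succ_mul m
  rw [numTernaryTrees_eq_div, numTernaryTrees_eq_div]
  push_cast
  rw [show 3 * ((m : ℝ) + 1) + 1 = 3 * m + 4 by ring, show 3 * (m + 1) + 1 = 3 * m + 4 by ring]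
  have := Nat.choose_pos (show m + 1 ≤ 3 * m + 4 by omega)
  field_simp
  refine mul_right_cancel₀ (show (m : ℝ) + 1 ≠ 0 by positivity) ?_
  linear_combination -hchoose

lemma tendsto_numTernaryTrees_div_succ :
    Tendsto (fun m => (numTernaryTrees m : ℝ) / numTernaryTrees (m + 1)) atTop
      (nhds (4 / 27)) := by
  have h1 := tendsto_affine_div_affine 1 1 3 1 (by norm_num)
  have h2 := tendsto_affine_div_affine 2 2 3 2 (by norm_num)
  have h3 := tendsto_affine_div_affine 2 3 3 3 (by norm_num)
  convert (h1.mul h2).mul h3 using 2 with m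
  · simp [numTernaryTrees_div_succ]
  · norm_num

lemma tendsto_numTernaryTrees_div_add (k : ℕ) :
    Tendsto (fun m => (numTernaryTrees m : ℝ) / numTernaryTrees (m + k)) atTop
      (nhds ((4 / 27) ^ k)) :=
  tendsto_div_add_of_tendsto_div_succ (fun n => Nat.cast_ne_zero.2 (numTernaryTrees_pos n).ne')
    tendsto_numTernaryTrees_div_succ k

lemma tendsto_marked_count_ratio (k : ℕ) :
    Tendsto (fun m => ((numTernaryTrees m * (2 * m + 1) * numTernaryTrees k : ℕ) : ℝ) /
        ((numTernaryTrees (m + k) * (m + k) : ℕ) : ℝ)) atTop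
      (nhds (numTernaryTrees k * 2 * (4 / 27) ^ k)) := by
  have hlin := tendsto_affine_div_affine 2 1 1 k one_ne_zero
  refine ((tendsto_const_nhds.mul (by simpa using hlin)).mul
    (tendsto_numTernaryTrees_div_add k)).congr fun m => ?_
  push_cast
  simp only [div_eq_mul_inv, mul_inv]
  ring

lemma numTernaryTrees_mul_two_mul_pow (k : ℕ) :
    (numTernaryTrees k : ℝ) * 2 * (4 / 27) ^ k =
      2 ^ (2 * k + 1) / (3 ^ (3 * k) * (3 * k + 1)) * (3 * k + 1).choose k := by
  rw [numTernaryTrees_eq_div, div_pow, pow_succ, pow_mul, pow_mul]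
  norm_num
  field_simp

lemma card_marked_internal (n : ℕ) :
    Nat.card {p : PlaneTree × List ℕ // p.1.IsTernary ∧ p.1.size = 3 * n + 1 ∧
        ∃ ts, PlaneTree.subtreeAt p.2 p.1 = some (PlaneTree.node ts) ∧ ts ≠ []} =
      numTernaryTrees n * n := by
  have hset : {p : PlaneTree × List ℕ | p.1.IsTernary ∧ p.1.size = 3 * n + 1 ∧
      ∃ ts, PlaneTree.subtreeAt p.2 p.1 = some (PlaneTree.node ts) ∧ ts ≠ []} =
      markedTernaryTrees n (· ≠ node []) := by
    ext ⟨T, a⟩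
    simp only [markedTernaryTrees, nodesWhere, mem_ternaryTrees_iff_size, Set.mem_ofPred_eq,
      and_assoc]
    refine and_congr_right fun _ => and_congr_right fun _ => ⟨?_, ?_⟩
    · rintro ⟨ts, h, hts⟩
      exact ⟨_, h, by simpa using hts⟩
    · rintro ⟨⟨ts⟩, h, hts⟩
      exact ⟨ts, h, by simpa using hts⟩
  rw [← Set.coe_ofPred, Nat.card_coe_set_eq, hset, Set.ncard_def,
    encard_markedTernaryTrees_ne_leaf, ← cast_numTernaryTrees]
  norm_cast

lemma card_marked_internal_of_size {k : ℕ} (hk : 1 ≤ k) (m : ℕ) :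
    Nat.card {p : PlaneTree × List ℕ // p.1.IsTernary ∧ p.1.size = 3 * (m + k) + 1 ∧
        ∃ ts, PlaneTree.subtreeAt p.2 p.1 = some (PlaneTree.node ts) ∧ ts ≠ [] ∧
          (PlaneTree.node ts).size = 3 * k + 1} =
      numTernaryTrees m * (2 * m + 1) * numTernaryTrees k := by
  have hset : {p : PlaneTree × List ℕ | p.1.IsTernary ∧ p.1.size = 3 * (m + k) + 1 ∧
      ∃ ts, PlaneTree.subtreeAt p.2 p.1 = some (PlaneTree.node ts) ∧ ts ≠ [] ∧
        (PlaneTree.node ts).size = 3 * k + 1} =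
      markedTernaryTrees (m + k) (· ∈ ternaryTrees k) := by
    ext ⟨T, a⟩
    simp only [markedTernaryTrees, nodesWhere, mem_ternaryTrees_iff_size, Set.mem_ofPred_eq,
      and_assoc]
    refine and_congr_right fun hT => and_congr_right fun _ => ⟨?_, ?_⟩
    · rintro ⟨ts, h, -, hsize⟩
      exact ⟨_, h, hT.subtreeAt h, hsize⟩
    · rintro ⟨⟨ts⟩, h, hS, hsize⟩
      refine ⟨ts, h, ?_, hsize⟩
      rintro rfl
      simp at hsize
      omega
  rw [← Set.coe_ofPred, Nat.card_coe_set_eq, hset, Set.ncard_def,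
    encard_markedTernaryTrees_mem, ← cast_numTernaryTrees, ← cast_numTernaryTrees]
  norm_cast

end PlaneTree

/-- For a uniformly random ternary tree with `3n+1` nodes together with a uniformly
random internal node `u`, the size of the fringe subtree rooted at `u` converges in
distribution, as `n → ∞`, to the law `P(K = 3k+1) = (2^{2k+1}/(3^{3k}(3k+1)))·C(3k+1,k)`
for `k ≥ 1`. -/
theorem fringe_subtree_size_limit (k : ℕ) (hk : 1 ≤ k) :
    Tendsto (fun n : ℕ =>
      (Nat.card {p : PlaneTree × List ℕ //
          p.1.IsTernary ∧ p.1.size = 3 * n + 1 ∧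
          ∃ ts, PlaneTree.subtreeAt p.2 p.1 = some (PlaneTree.node ts) ∧ ts ≠ [] ∧
            (PlaneTree.node ts).size = 3 * k + 1} : ℝ) /
      (Nat.card {p : PlaneTree × List ℕ //
          p.1.IsTernary ∧ p.1.size = 3 * n + 1 ∧
          ∃ ts, PlaneTree.subtreeAt p.2 p.1 = some (PlaneTree.node ts) ∧ ts ≠ []} : ℝ))
      atTop
      (nhds ((2 : ℝ) ^ (2 * k + 1) / (3 ^ (3 * k) * (3 * k + 1)) *
        Nat.choose (3 * k + 1) k)) := by
  rw [← tendsto_add_atTop_iff_nat k, ← PlaneTree.numTernaryTrees_mul_two_mul_pow]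
  simpa only [PlaneTree.card_marked_internal_of_size hk, PlaneTree.card_marked_internal] using
    PlaneTree.tendsto_marked_count_ratio k
end

section
/- The probabilities p_k = (k/(k+3)) · C(2k+2, k) · 2^{k+3}/3^{2k+3}, for k ≥ 0, sum to 1. -/
open Finset

namespace RootDegAux

/-- `cc k = catalan k * (2/9)^k`. -/
noncomputable def cc (k : ℕ) : ℝ := (catalan k : ℝ) * (2/9) ^ k

/-- `dd k = k * catalan k * (2/9)^k`. -/
noncomputable def dd (k : ℕ) : ℝ := (k : ℝ) * (catalan k : ℝ) * (2/9) ^ k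

lemma centralBinom_le_four_pow (n : ℕ) : n.centralBinom ≤ 4 ^ n := by
  calc n.centralBinom = (2*n).choose n := rfl
    _ ≤ (2*n+1).choose n := Nat.choose_le_choose n (by omega)
    _ ≤ 4 ^ n := Nat.choose_middle_le_pow n

lemma catalan_mul_le (n : ℕ) : ((n:ℝ)+1) * (catalan n : ℝ) ≤ 4 ^ n := by
  have h : ((n+1) * catalan n : ℕ) ≤ 4 ^ n := by
    rw [succ_mul_catalan_eq_centralBinom]
    exact centralBinom_le_four_pow n
  calc ((n:ℝ)+1) * (catalan n : ℝ) = (((n+1) * catalan n : ℕ) : ℝ) := by push_cast; ring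
    _ ≤ ((4 ^ n : ℕ) : ℝ) := by exact_mod_cast h
    _ = 4 ^ n := by push_cast; ring

lemma catalan_le (n : ℕ) : (catalan n : ℝ) ≤ 4 ^ n := by
  have h := catalan_mul_le n
  have h1 : (1:ℝ) ≤ (n:ℝ)+1 := by
    have : (0:ℝ) ≤ (n:ℝ) := Nat.cast_nonneg n
    linarith
  nlinarith [Nat.cast_nonneg (α := ℝ) (catalan n), pow_pos (by norm_num : (0:ℝ) < 4) n]

lemma cc_nonneg (k : ℕ) : 0 ≤ cc k := by
  unfold cc; positivity

lemma dd_nonneg (k : ℕ) : 0 ≤ dd k := by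
  unfold dd; positivity

lemma cc_le (k : ℕ) : cc k ≤ (8/9) ^ k := by
  unfold cc
  calc (catalan k : ℝ) * (2/9) ^ k ≤ 4 ^ k * (2/9) ^ k := by
        have := catalan_le k
        have h2 : (0:ℝ) ≤ (2/9) ^ k := by positivity
        nlinarith
    _ = (8/9) ^ k := by rw [← mul_pow]; norm_num

lemma cc_le' (k : ℕ) : ((k:ℝ)+1) * cc k ≤ (8/9) ^ k := by
  unfold cc
  calc ((k:ℝ)+1) * ((catalan k : ℝ) * (2/9) ^ k) = (((k:ℝ)+1) * (catalan k : ℝ)) * (2/9) ^ k := by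
        ring
    _ ≤ 4 ^ k * (2/9) ^ k := by
        have := catalan_mul_le k
        have h2 : (0:ℝ) ≤ (2/9) ^ k := by positivity
        nlinarith
    _ = (8/9) ^ k := by rw [← mul_pow]; norm_num

lemma dd_le (k : ℕ) : dd k ≤ (k:ℝ) ^ 1 * (8/9) ^ k := by
  unfold dd
  have h := catalan_le k
  have h2 : (0:ℝ) ≤ (2/9) ^ k := by positivity
  have h3 : (0:ℝ) ≤ (k:ℝ) := Nat.cast_nonneg k
  calc (k:ℝ) * (catalan k : ℝ) * (2/9) ^ k ≤ (k:ℝ) * 4 ^ k * (2/9) ^ k := by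
        gcongr
    _ = (k:ℝ) ^ 1 * (4 ^ k * (2/9) ^ k) := by ring
    _ = (k:ℝ) ^ 1 * (8/9) ^ k := by rw [← mul_pow]; norm_num

lemma summable_cc : Summable cc :=
  Summable.of_nonneg_of_le cc_nonneg cc_le
    (summable_geometric_of_lt_one (by norm_num) (by norm_num))

lemma summable_dd : Summable dd := by
  refine Summable.of_nonneg_of_le dd_nonneg dd_le ?_
  have : ‖(8/9 : ℝ)‖ < 1 := by rw [Real.norm_eq_abs]; rw [abs_of_nonneg (by norm_num)]; norm_num
  exact summable_pow_mul_geometric_of_norm_lt_one 1 this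

lemma summable_norm_cc : Summable fun k => ‖cc k‖ := by
  have : (fun k => ‖cc k‖) = cc := by
    funext k; rw [Real.norm_eq_abs, abs_of_nonneg (cc_nonneg k)]
  rw [this]; exact summable_cc

lemma summable_norm_dd : Summable fun k => ‖dd k‖ := by
  have : (fun k => ‖dd k‖) = dd := by
    funext k; rw [Real.norm_eq_abs, abs_of_nonneg (dd_nonneg k)]
  rw [this]; exact summable_dd

lemma inner_cc (n : ℕ) :
    ∑ p ∈ antidiagonal n, cc p.1 * cc p.2 = (catalan (n+1) : ℝ) * (2/9) ^ n := by
  rw [catalan_succ' n]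
  push_cast
  rw [Finset.sum_mul]
  refine Finset.sum_congr rfl fun p hp => ?_
  have hpn : p.1 + p.2 = n := Finset.HasAntidiagonal.mem_antidiagonal.mp hp
  unfold cc
  rw [← hpn, pow_add]
  ring

lemma inner_cd (n : ℕ) :
    2 * ∑ p ∈ antidiagonal n, cc p.1 * dd p.2
      = (n : ℝ) * (catalan (n+1) : ℝ) * (2/9) ^ n := by
  have hswap : ∑ p ∈ antidiagonal n, dd p.1 * cc p.2
      = ∑ p ∈ antidiagonal n, cc p.1 * dd p.2 := by
    have h := Finset.Nat.sum_antidiagonal_swap (n := n) (f := fun p : ℕ × ℕ => cc p.1 * dd p.2)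
    simp only [Prod.fst_swap, Prod.snd_swap] at h
    rw [← h]
    exact Finset.sum_congr rfl fun p _ => mul_comm _ _
  have key : ∑ p ∈ antidiagonal n, (cc p.1 * dd p.2 + dd p.1 * cc p.2)
      = (n : ℝ) * (catalan (n+1) : ℝ) * (2/9) ^ n := by
    have : ∀ p ∈ antidiagonal n, cc p.1 * dd p.2 + dd p.1 * cc p.2
        = (n : ℝ) * ((catalan p.1 : ℝ) * (catalan p.2 : ℝ)) * (2/9) ^ n := by
      intro p hp
      have hpn : p.1 + p.2 = n := Finset.HasAntidiagonal.mem_antidiagonal.mp hp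
      unfold cc dd
      rw [← hpn, pow_add]
      push_cast
      ring
    rw [Finset.sum_congr rfl this, ← Finset.sum_mul, ← Finset.mul_sum]
    rw [catalan_succ' n]
    push_cast
    ring
  rw [Finset.sum_add_distrib, hswap] at key
  linarith [key]

lemma cc_zero : cc 0 = 1 := by unfold cc; simp

lemma dd_zero : dd 0 = 0 := by unfold dd; simp

lemma dd_one : dd 1 = 2/9 := by unfold dd; simp

theorem L_eq : (∑' k, cc k) = 3/2 := by
  set L : ℝ := ∑' k, cc k with hLdef
  -- Cauchy product equation
  have hcauchy : L * L = ∑' n, ∑ p ∈ antidiagonal n, cc p.1 * cc p.2 :=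
    tsum_mul_tsum_eq_tsum_sum_antidiagonal_of_summable_norm summable_norm_cc summable_norm_cc
  have hLsq : L * L = ∑' n : ℕ, (catalan (n+1) : ℝ) * (2/9) ^ n := by
    rw [hcauchy]; exact tsum_congr inner_cc
  have hshift1 : (∑ i ∈ range 1, cc i) + (∑' i, cc (i + 1)) = L :=
    Summable.sum_add_tsum_nat_add 1 summable_cc
  have htail1 : (∑' i, cc (i + 1)) = L - 1 := by
    have : (∑ i ∈ range 1, cc i) = 1 := by simp [cc_zero]
    linarith [hshift1, this.symm ▸ hshift1]
  have heq : (2/9) * (L * L) = L - 1 := by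
    rw [hLsq, ← tsum_mul_left]
    rw [← htail1]
    refine tsum_congr fun n => ?_
    unfold cc
    rw [pow_succ]
    ring
  -- bound : L < 3
  have hbound : L < 3 := by
    have hsplit : (∑ i ∈ range 4, cc i) + (∑' i, cc (i + 4)) = L :=
      Summable.sum_add_tsum_nat_add 4 summable_cc
    have hhead : (∑ i ∈ range 4, cc i) = 1003/729 := by
      rw [Finset.sum_range_succ, Finset.sum_range_succ, Finset.sum_range_succ,
        Finset.sum_range_one]
      unfold cc
      rw [catalan_zero, catalan_one, catalan_two, catalan_three]
      norm_num
    have htail : (∑' i, cc (i + 4)) ≤ 36864/32805 := by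
      have hg : Summable (fun i : ℕ => (4096/32805 : ℝ) * (8/9) ^ i) :=
        (summable_geometric_of_lt_one (by norm_num) (by norm_num)).mul_left _
      have hle : ∀ i : ℕ, cc (i + 4) ≤ (4096/32805 : ℝ) * (8/9) ^ i := by
        intro i
        have h1 : ((i:ℝ) + 4 + 1) * cc (i + 4) ≤ (8/9) ^ (i + 4) := by
          have := cc_le' (i + 4); push_cast at this ⊢; linarith
        have h2 : (5:ℝ) ≤ (i:ℝ) + 4 + 1 := by
          have : (0:ℝ) ≤ (i:ℝ) := Nat.cast_nonneg i
          linarith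
        have h3 : 0 ≤ cc (i + 4) := cc_nonneg _
        have h5 : (5:ℝ) * cc (i + 4) ≤ (8/9) ^ (i + 4) := by nlinarith
        have h6 : ((8:ℝ)/9) ^ (i + 4) = (4096/6561) * (8/9) ^ i := by
          rw [pow_add]; ring
        rw [h6] at h5
        linarith
      have hmono := Summable.tsum_le_tsum hle ((summable_nat_add_iff 4).mpr summable_cc) hg
      have hgv : (∑' i : ℕ, (4096/32805 : ℝ) * (8/9) ^ i) = 36864/32805 := by
        rw [tsum_mul_left, tsum_geometric_of_lt_one (by norm_num) (by norm_num)]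
        norm_num
      linarith [hmono, hgv.symm ▸ hmono]
    nlinarith [hsplit, hhead, htail]
  -- solve the quadratic
  have hfac : (2*L - 3) * (L - 3) = 0 := by nlinarith [heq]
  rcases mul_eq_zero.mp hfac with h | h
  · linarith
  · linarith [hbound]

theorem M_eq : (∑' k, dd k) = 3/2 := by
  set L : ℝ := ∑' k, cc k with hLdef
  set M : ℝ := ∑' k, dd k with hMdef
  have hL : L = 3/2 := L_eq
  have hcauchy : L * M = ∑' n, ∑ p ∈ antidiagonal n, cc p.1 * dd p.2 :=
    tsum_mul_tsum_eq_tsum_sum_antidiagonal_of_summable_norm summable_norm_cc summable_norm_dd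
  have h2LM : 2 * (L * M) = ∑' n : ℕ, (n : ℝ) * (catalan (n+1) : ℝ) * (2/9) ^ n := by
    rw [hcauchy, ← tsum_mul_left]
    exact tsum_congr inner_cd
  -- multiply by 2/9 and identify with shifted sums
  have hsub : ∀ n : ℕ, dd (n+1) - cc (n+1) = (2/9) * ((n : ℝ) * (catalan (n+1) : ℝ) * (2/9) ^ n) := by
    intro n
    unfold cc dd
    rw [pow_succ]
    push_cast
    ring
  have hsd : Summable fun n => dd (n + 1) := (summable_nat_add_iff 1).mpr summable_dd
  have hsc : Summable fun n => cc (n + 1) := (summable_nat_add_iff 1).mpr summable_cc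
  have htd : (∑' n, dd (n + 1)) = M := by
    have h := Summable.sum_add_tsum_nat_add 1 summable_dd
    have h0 : (∑ i ∈ range 1, dd i) = 0 := by simp [dd_zero]
    rw [h0, zero_add] at h
    exact h
  have htc : (∑' n, cc (n + 1)) = L - 1 := by
    have h := Summable.sum_add_tsum_nat_add 1 summable_cc
    have h0 : (∑ i ∈ range 1, cc i) = 1 := by simp [cc_zero]
    rw [h0] at h
    linarith
  have hkey : M - (L - 1) = (2/9) * (2 * (L * M)) := by
    calc M - (L - 1) = (∑' n, dd (n + 1)) - (∑' n, cc (n + 1)) := by rw [htd, htc]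
      _ = ∑' n, (dd (n + 1) - cc (n + 1)) := (Summable.tsum_sub hsd hsc).symm
      _ = ∑' n : ℕ, (2/9) * ((n : ℝ) * (catalan (n+1) : ℝ) * (2/9) ^ n) := tsum_congr hsub
      _ = (2/9) * ∑' n : ℕ, (n : ℝ) * (catalan (n+1) : ℝ) * (2/9) ^ n := tsum_mul_left
      _ = (2/9) * (2 * (L * M)) := by rw [h2LM]
  rw [hL] at hkey
  linarith

/-- Key binomial identity over `ℝ`:
`(k+3) * (catalan (k+2) - catalan (k+1)) = 3 * choose (2k+2) k`. -/
lemma key_identity (k : ℕ) :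
    ((k:ℝ) + 3) * ((catalan (k+2) : ℝ) - (catalan (k+1) : ℝ))
      = 3 * ((2*k+2).choose k : ℝ) := by
  have e1 : ((k:ℝ) + 3) * (catalan (k+2) : ℝ) = ((k+2).centralBinom : ℝ) := by
    have := succ_mul_catalan_eq_centralBinom (k+2)
    have h : (((k+2+1) * catalan (k+2) : ℕ) : ℝ) = (((k+2).centralBinom : ℕ) : ℝ) := by
      exact_mod_cast congrArg (Nat.cast (R := ℝ)) this
    push_cast at h
    push_cast
    linarith
  have e2 : ((k:ℝ) + 2) * (catalan (k+1) : ℝ) = ((k+1).centralBinom : ℝ) := by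
    have := succ_mul_catalan_eq_centralBinom (k+1)
    have h : (((k+1+1) * catalan (k+1) : ℕ) : ℝ) = (((k+1).centralBinom : ℕ) : ℝ) := by
      exact_mod_cast congrArg (Nat.cast (R := ℝ)) this
    push_cast at h
    push_cast
    linarith
  have e3 : ((k:ℝ) + 2) * ((k+2).centralBinom : ℝ)
      = 2 * (2*(k:ℝ) + 3) * ((k+1).centralBinom : ℝ) := by
    have := Nat.succ_mul_centralBinom_succ (k+1)
    have h : (((k+1+1) * (k+1+1).centralBinom : ℕ) : ℝ)
        = ((2 * (2*(k+1)+1) * (k+1).centralBinom : ℕ) : ℝ) := by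
      exact_mod_cast congrArg (Nat.cast (R := ℝ)) this
    push_cast at h
    push_cast
    linarith
  have e5 : (k+1).centralBinom = (2*k+2).choose (k+1) := by
    have h : 2*(k+1) = 2*k+2 := by ring
    rw [Nat.centralBinom, h]
  have e4 : (((2*k+2).choose (k+1) : ℕ) : ℝ) * ((k:ℝ)+1)
      = (((2*k+2).choose k : ℕ) : ℝ) * ((k:ℝ)+2) := by
    have h := Nat.choose_succ_right_eq (2*k+2) k
    have h2 : 2*k+2 - k = k + 2 := by omega
    rw [h2] at h
    have := congrArg (Nat.cast (R := ℝ)) h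
    push_cast at this
    push_cast
    linarith
  have e5' : (((k+1).centralBinom : ℕ) : ℝ) = (((2*k+2).choose (k+1) : ℕ) : ℝ) := by
    exact_mod_cast congrArg (Nat.cast (R := ℝ)) e5
  -- multiply the goal by (k+2) ≠ 0
  have hk2 : ((k:ℝ) + 2) ≠ 0 := by positivity
  apply mul_left_cancel₀ hk2
  calc ((k:ℝ) + 2) * (((k:ℝ) + 3) * ((catalan (k+2) : ℝ) - (catalan (k+1) : ℝ)))
      = ((k:ℝ)+3) * (((k:ℝ)+2) * (catalan (k+2) : ℝ))
        - ((k:ℝ)+3) * (((k:ℝ)+2) * (catalan (k+1) : ℝ)) := by ring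
    _ = ((k:ℝ)+3) * (((k:ℝ)+2) * (catalan (k+2) : ℝ))
        - ((k:ℝ)+3) * ((k+1).centralBinom : ℝ) := by rw [e2]
    _ = 3 * ((k:ℝ)+1) * ((k+1).centralBinom : ℝ) := by nlinarith [e1, e3]
    _ = 3 * (((2*k+2).choose (k+1) : ℕ) : ℝ) * ((k:ℝ)+1) := by rw [e5']; ring
    _ = 3 * ((((2*k+2).choose k : ℕ) : ℝ) * ((k:ℝ)+2)) := by rw [← e4]; ring
    _ = ((k:ℝ) + 2) * (3 * ((2*k+2).choose k : ℝ)) := by ring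

end RootDegAux

open RootDegAux in
/-- The probabilities `p_k = (k/(k+3)) · C(2k+2, k) · 2^{k+3}/3^{2k+3}`, for `k ≥ 0`,
sum to 1. -/
theorem root_degree_limit_law_sums_to_one :
    (∑' k : ℕ, ((k : ℝ) / (k + 3)) * (Nat.choose (2 * k + 2) k : ℝ) *
      2 ^ (k + 3) / 3 ^ (2 * k + 3)) = 1 := by
  -- pointwise rewrite of the summand
  have hpt : ∀ k : ℕ, ((k : ℝ) / (k + 3)) * (Nat.choose (2 * k + 2) k : ℝ) *
      2 ^ (k + 3) / 3 ^ (2 * k + 3)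
      = (8/81) * ((81/4) * (dd (k+2) - 2 * cc (k+2)) - (9/2) * (dd (k+1) - cc (k+1))) := by
    intro k
    have hk3 : ((k:ℝ) + 3) ≠ 0 := by positivity
    have hkey := key_identity k
    -- choose value in terms of catalan numbers
    have hch : ((2*k+2).choose k : ℝ)
        = ((k:ℝ) + 3) * ((catalan (k+2) : ℝ) - (catalan (k+1) : ℝ)) / 3 := by
      field_simp
      linarith [hkey]
    have hpow : (3:ℝ) ^ (2*k+3) = 27 * 9 ^ k := by
      rw [pow_add, pow_mul]
      norm_num [mul_comm]
    have hpow2 : (2:ℝ) ^ (k+3) = 8 * 2 ^ k := by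
      rw [pow_add]; ring
    have hx : ((2:ℝ)/9) ^ k = 2 ^ k / 9 ^ k := div_pow 2 9 k
    unfold cc dd
    rw [hch, hpow, hpow2]
    have h9 : (9:ℝ) ^ k ≠ 0 := by positivity
    have h2 : ((2:ℝ)/9) ^ (k+2) = (2/9)^k * (4/81) := by rw [pow_add]; norm_num
    have h1 : ((2:ℝ)/9) ^ (k+1) = (2/9)^k * (2/9) := by rw [pow_add]; norm_num
    rw [h2, h1, hx]
    push_cast
    field_simp
    ring
  rw [tsum_congr hpt]
  -- summability of the shifted pieces
  have hdd2 : Summable (fun k => dd (k+2)) := (summable_nat_add_iff 2).mpr summable_dd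
  have hcc2 : Summable (fun k => cc (k+2)) := (summable_nat_add_iff 2).mpr summable_cc
  have hdd1 : Summable (fun k => dd (k+1)) := (summable_nat_add_iff 1).mpr summable_dd
  have hcc1 : Summable (fun k => cc (k+1)) := (summable_nat_add_iff 1).mpr summable_cc
  -- values of the shifted sums
  have hL : (∑' k, cc k) = 3/2 := L_eq
  have hM : (∑' k, dd k) = 3/2 := M_eq
  have hT2 : (∑' k, dd (k+2)) = 23/18 := by
    have h := Summable.sum_add_tsum_nat_add 2 summable_dd
    have h0 : (∑ i ∈ range 2, dd i) = 2/9 := by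
      rw [Finset.sum_range_succ, Finset.sum_range_one, dd_zero, dd_one]; norm_num
    rw [h0, hM] at h
    linarith
  have hS2 : (∑' k, cc (k+2)) = 5/18 := by
    have h := Summable.sum_add_tsum_nat_add 2 summable_cc
    have h0 : (∑ i ∈ range 2, cc i) = 11/9 := by
      rw [Finset.sum_range_succ, Finset.sum_range_one, cc_zero]
      unfold cc
      rw [catalan_one]
      norm_num
    rw [h0, hL] at h
    linarith
  have hT1 : (∑' k, dd (k+1)) = 3/2 := by
    have h := Summable.sum_add_tsum_nat_add 1 summable_dd
    have h0 : (∑ i ∈ range 1, dd i) = 0 := by simp [dd_zero]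
    rw [h0, hM] at h
    linarith
  have hS1 : (∑' k, cc (k+1)) = 1/2 := by
    have h := Summable.sum_add_tsum_nat_add 1 summable_cc
    have h0 : (∑ i ∈ range 1, cc i) = 1 := by simp [cc_zero]
    rw [h0, hL] at h
    linarith
  -- assemble
  have hsum2 : Summable (fun k => dd (k+2) - 2 * cc (k+2)) := hdd2.sub (hcc2.mul_left 2)
  have hsum1 : Summable (fun k => dd (k+1) - cc (k+1)) := hdd1.sub hcc1
  rw [tsum_mul_left]
  rw [Summable.tsum_sub ((hsum2).mul_left _) ((hsum1).mul_left _)]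
  rw [tsum_mul_left, tsum_mul_left]
  rw [Summable.tsum_sub hdd2 (hcc2.mul_left 2), Summable.tsum_sub hdd1 hcc1]
  rw [tsum_mul_left]
  rw [hT2, hS2, hT1, hS1]
  norm_num
end

section
/- The probabilities q_k = (1/(k+3)) · C(2k+2, k) · 2^{k+3}/3^{2k+2}, for k ≥ 0, sum to 1. -/
set_option maxHeartbeats 1000000

open Finset

private lemma centralBinom_le_four_pow (n : ℕ) : Nat.centralBinom n ≤ 4 ^ n := by
  have h1 : Nat.centralBinom n ≤ ∑ i ∈ range (2 * n + 1), (2 * n).choose i :=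
    Finset.single_le_sum (f := fun i => (2 * n).choose i) (fun i _ => Nat.zero_le _)
      (mem_range.2 (by omega))
  have h2 : (∑ i ∈ range (2 * n + 1), (2 * n).choose i) = 2 ^ (2 * n) :=
    Nat.sum_range_choose (2 * n)
  calc Nat.centralBinom n ≤ 2 ^ (2 * n) := h1.trans_eq h2
    _ = 4 ^ n := by rw [pow_mul]; norm_num

private lemma catalan_le_four_pow (n : ℕ) : catalan n ≤ 4 ^ n :=
  calc catalan n ≤ (n + 1) * catalan n := Nat.le_mul_of_pos_left _ (by omega)
    _ = Nat.centralBinom n := succ_mul_catalan_eq_centralBinom n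
    _ ≤ 4 ^ n := centralBinom_le_four_pow n

private lemma cat_term_le (n : ℕ) : (catalan n : ℝ) * (2 / 9) ^ n ≤ (8 / 9) ^ n := by
  have h : (catalan n : ℝ) ≤ 4 ^ n := by exact_mod_cast Nat.cast_le.mpr (catalan_le_four_pow n)
  calc (catalan n : ℝ) * (2 / 9) ^ n ≤ 4 ^ n * (2 / 9) ^ n := by
        apply mul_le_mul_of_nonneg_right h (by positivity)
    _ = (8 / 9) ^ n := by rw [← mul_pow]; norm_num

private lemma cat_summable : Summable (fun n : ℕ => (catalan n : ℝ) * (2 / 9) ^ n) := by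
  apply Summable.of_nonneg_of_le (fun n => by positivity) cat_term_le
  exact summable_geometric_of_lt_one (by norm_num) (by norm_num)

private lemma cat_summable1 : Summable (fun n : ℕ => (catalan (n + 1) : ℝ) * (2 / 9) ^ n) := by
  have h := ((summable_nat_add_iff 1).mpr cat_summable).mul_left ((9 : ℝ) / 2)
  refine h.congr fun n => ?_
  rw [pow_succ]
  ring

private lemma cat_summable2 : Summable (fun n : ℕ => (catalan (n + 2) : ℝ) * (2 / 9) ^ n) := by
  have h := ((summable_nat_add_iff 1).mpr cat_summable1).mul_left ((9 : ℝ) / 2)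
  refine h.congr fun n => ?_
  rw [pow_succ]
  ring

private lemma cat_gf_eq : (∑' n : ℕ, (catalan n : ℝ) * (2 / 9) ^ n) = 3 / 2 := by
  set T : ℝ := ∑' n : ℕ, (catalan n : ℝ) * (2 / 9) ^ n with hTdef
  -- Cauchy product : T * T = ∑' n, catalan (n+1) * (2/9)^n
  have hnorm : Summable fun n : ℕ => ‖(catalan n : ℝ) * (2 / 9) ^ n‖ := by
    refine cat_summable.congr fun n => ?_
    rw [Real.norm_of_nonneg (by positivity)]
  have hcauchy : T * T = ∑' n : ℕ, (catalan (n + 1) : ℝ) * (2 / 9) ^ n := by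
    rw [hTdef, tsum_mul_tsum_eq_tsum_sum_antidiagonal_of_summable_norm hnorm hnorm]
    refine tsum_congr fun n => ?_
    rw [catalan_succ']
    push_cast
    rw [sum_mul]
    refine Finset.sum_congr rfl fun kl hkl => ?_
    have h := Finset.HasAntidiagonal.mem_antidiagonal.mp hkl
    rw [← h, pow_add]
    ring
  -- T = 1 + (2/9) * (T * T)
  have hshift : T = 1 + 2 / 9 * (T * T) := by
    rw [hcauchy, hTdef, Summable.tsum_eq_zero_add cat_summable]
    have : (∑' n : ℕ, (catalan (n + 1) : ℝ) * (2 / 9) ^ (n + 1))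
        = ∑' n : ℕ, 2 / 9 * ((catalan (n + 1) : ℝ) * (2 / 9) ^ n) := by
      refine tsum_congr fun n => ?_
      rw [pow_succ]
      ring
    rw [this, tsum_mul_left]
    norm_num
  -- T < 3
  have hlt : T < 3 := by
    have hsplit := Summable.sum_add_tsum_nat_add (f := fun n : ℕ => (catalan n : ℝ) * (2 / 9) ^ n)
      4 cat_summable
    have htail : (∑' n : ℕ, (catalan (n + 4) : ℝ) * (2 / 9) ^ (n + 4))
        ≤ ∑' n : ℕ, (1 / 5 * (8 / 9) ^ 4) * (8 / 9) ^ n := by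
      refine Summable.tsum_le_tsum (fun n => ?_) ((summable_nat_add_iff 4).mpr cat_summable)
        ((summable_geometric_of_lt_one (by norm_num) (by norm_num)).mul_left _)
      have h5 : (catalan (n + 4) : ℝ) ≤ 4 ^ (n + 4) / 5 := by
        have h1 : 5 * catalan (n + 4) ≤ (n + 4 + 1) * catalan (n + 4) :=
          Nat.mul_le_mul_right _ (by omega)
        have h2 : (n + 4 + 1) * catalan (n + 4) = Nat.centralBinom (n + 4) :=
          succ_mul_catalan_eq_centralBinom (n + 4)
        have h3 : 5 * catalan (n + 4) ≤ 4 ^ (n + 4) :=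
          (h1.trans_eq h2).trans (centralBinom_le_four_pow (n + 4))
        have h4 : (5 : ℝ) * (catalan (n + 4) : ℝ) ≤ 4 ^ (n + 4) := by exact_mod_cast h3
        linarith
      calc (catalan (n + 4) : ℝ) * (2 / 9) ^ (n + 4)
          ≤ 4 ^ (n + 4) / 5 * (2 / 9) ^ (n + 4) := by
            apply mul_le_mul_of_nonneg_right h5 (by positivity)
        _ = 1 / 5 * (8 / 9) ^ (n + 4) := by rw [div_mul_eq_mul_div, ← mul_pow]; norm_num; ring
        _ = (1 / 5 * (8 / 9) ^ 4) * (8 / 9) ^ n := by rw [pow_add]; ring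
    have hgeo : (∑' n : ℕ, (1 / 5 * (8 / 9) ^ 4 : ℝ) * (8 / 9) ^ n)
        = (1 / 5 * (8 / 9) ^ 4) * 9 := by
      rw [tsum_mul_left, tsum_geometric_of_lt_one (by norm_num) (by norm_num)]
      norm_num
    have hpart : (∑ i ∈ range 4, (catalan i : ℝ) * (2 / 9) ^ i) = 1003 / 729 := by
      simp [Finset.sum_range_succ, catalan_two, catalan_three]
      norm_num
    rw [hTdef, ← hsplit, hpart]
    nlinarith [htail, hgeo]
  -- solve the quadratic
  have hquad : (2 / 9 : ℝ) * (T - 3 / 2) * (T - 3) = 0 := by linarith [hshift, sq_nonneg T]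
  rcases mul_eq_zero.mp hquad with h | h
  · rcases mul_eq_zero.mp h with h' | h'
    · norm_num at h'
    · linarith
  · linarith

private lemma cat_gf1_eq : (∑' n : ℕ, (catalan (n + 1) : ℝ) * (2 / 9) ^ n) = 9 / 4 := by
  have hnorm : Summable fun n : ℕ => ‖(catalan n : ℝ) * (2 / 9) ^ n‖ := by
    refine cat_summable.congr fun n => ?_
    rw [Real.norm_of_nonneg (by positivity)]
  have hcauchy : (∑' n : ℕ, (catalan n : ℝ) * (2 / 9) ^ n)
      * (∑' n : ℕ, (catalan n : ℝ) * (2 / 9) ^ n)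
      = ∑' n : ℕ, (catalan (n + 1) : ℝ) * (2 / 9) ^ n := by
    rw [tsum_mul_tsum_eq_tsum_sum_antidiagonal_of_summable_norm hnorm hnorm]
    refine tsum_congr fun n => ?_
    rw [catalan_succ']
    push_cast
    rw [sum_mul]
    refine Finset.sum_congr rfl fun kl hkl => ?_
    have h := Finset.HasAntidiagonal.mem_antidiagonal.mp hkl
    rw [← h, pow_add]
    ring
  rw [cat_gf_eq] at hcauchy
  rw [← hcauchy]
  norm_num

private lemma cat_gf2_eq : (∑' n : ℕ, (catalan (n + 2) : ℝ) * (2 / 9) ^ n) = 45 / 8 := by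
  have h := cat_gf1_eq
  rw [Summable.tsum_eq_zero_add cat_summable1] at h
  have h2 : (∑' n : ℕ, (catalan (n + 1 + 1) : ℝ) * (2 / 9) ^ (n + 1))
      = ∑' n : ℕ, 2 / 9 * ((catalan (n + 2) : ℝ) * (2 / 9) ^ n) := by
    refine tsum_congr fun n => ?_
    rw [pow_succ]
    ring
  rw [h2, tsum_mul_left] at h
  norm_num [catalan_one] at h
  linarith

/-- `3·C(2k+2, k) = (k+3)·(Cat(k+2) − Cat(k+1))` over the reals. -/
private lemma choose_catalan_identity (k : ℕ) :
    3 * ((Nat.choose (2 * k + 2) k : ℝ)) =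
      ((k : ℝ) + 3) * ((catalan (k + 2) : ℝ) - (catalan (k + 1) : ℝ)) := by
  have e1 : ((k : ℝ) + 2) * (catalan (k + 1) : ℝ) = (Nat.centralBinom (k + 1) : ℝ) := by
    exact_mod_cast congrArg (Nat.cast : ℕ → ℝ) (succ_mul_catalan_eq_centralBinom (k + 1))
  have e2 : ((k : ℝ) + 3) * (catalan (k + 2) : ℝ) = (Nat.centralBinom (k + 2) : ℝ) := by
    have := congrArg (Nat.cast : ℕ → ℝ) (succ_mul_catalan_eq_centralBinom (k + 2))
    push_cast at this ⊢
    linarith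
  have e3 : ((k : ℝ) + 2) * (Nat.centralBinom (k + 2) : ℝ)
      = 2 * (2 * (k : ℝ) + 3) * (Nat.centralBinom (k + 1) : ℝ) := by
    have := congrArg (Nat.cast : ℕ → ℝ) (Nat.succ_mul_centralBinom_succ (k + 1))
    push_cast at this ⊢
    linarith
  have e4 : ((k : ℝ) + 2) * (Nat.choose (2 * k + 2) k : ℝ)
      = ((k : ℝ) + 1) * (Nat.centralBinom (k + 1) : ℝ) := by
    have h := Nat.choose_succ_right_eq (2 * k + 2) k
    have h2 : 2 * k + 2 - k = k + 2 := by omega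
    rw [h2] at h
    have h3 : Nat.centralBinom (k + 1) = (2 * k + 2).choose (k + 1) := by
      rw [Nat.centralBinom, show 2 * (k + 1) = 2 * k + 2 from by ring]
    rw [h3]
    have := congrArg (Nat.cast : ℕ → ℝ) h
    push_cast at this ⊢
    linarith
  have hk2 : ((k : ℝ) + 2) ≠ 0 := by positivity
  apply mul_left_cancel₀ hk2
  linear_combination ((k : ℝ) + 3) * e1 - ((k : ℝ) + 2) * e2 - e3 + 3 * e4

private lemma term_eq (k : ℕ) :
    (1 / ((k : ℝ) + 3)) * (Nat.choose (2 * k + 2) k : ℝ) * 2 ^ (k + 3) / 3 ^ (2 * k + 2)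
      = 8 / 27 * (((catalan (k + 2) : ℝ) - (catalan (k + 1) : ℝ)) * (2 / 9) ^ k) := by
  have h := choose_catalan_identity k
  have hk3 : ((k : ℝ) + 3) ≠ 0 := by positivity
  have h2 : (2 : ℝ) ^ (k + 3) = 8 * 2 ^ k := by rw [pow_add]; ring
  have h3 : (3 : ℝ) ^ (2 * k + 2) = 9 * 9 ^ k := by
    rw [pow_add, pow_mul]
    norm_num
    ring
  have hd : (Nat.choose (2 * k + 2) k : ℝ)
      = ((k : ℝ) + 3) * ((catalan (k + 2) : ℝ) - (catalan (k + 1) : ℝ)) / 3 := by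
    linarith
  rw [h2, h3, div_pow, hd]
  have h9 : ((9 : ℝ) ^ k) ≠ 0 := by positivity
  field_simp
  ring

/-- The probabilities `q_k = (1/(k+3)) · C(2k+2, k) · 2^{k+3}/3^{2k+2}`, for `k ≥ 0`,
sum to 1. -/
theorem typical_degree_limit_law_sums_to_one :
    (∑' k : ℕ, (1 / ((k : ℝ) + 3)) * (Nat.choose (2 * k + 2) k : ℝ) *
      2 ^ (k + 3) / 3 ^ (2 * k + 2)) = 1 := by
  have h1 : (∑' k : ℕ, (1 / ((k : ℝ) + 3)) * (Nat.choose (2 * k + 2) k : ℝ) *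
      2 ^ (k + 3) / 3 ^ (2 * k + 2))
      = ∑' k : ℕ, 8 / 27 * (((catalan (k + 2) : ℝ) - (catalan (k + 1) : ℝ)) * (2 / 9) ^ k) :=
    tsum_congr term_eq
  rw [h1, tsum_mul_left]
  have h2 : (∑' k : ℕ, ((catalan (k + 2) : ℝ) - (catalan (k + 1) : ℝ)) * (2 / 9) ^ k)
      = (∑' k : ℕ, (catalan (k + 2) : ℝ) * (2 / 9) ^ k)
        - ∑' k : ℕ, (catalan (k + 1) : ℝ) * (2 / 9) ^ k := by
    rw [← Summable.tsum_sub cat_summable2 cat_summable1]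
    refine tsum_congr fun k => ?_
    ring
  rw [h2, cat_gf2_eq, cat_gf1_eq]
  norm_num
end
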